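/- arXiv:0906.0058 — 10 statements merged into one kernel-verified Lean document; each statement's English description precedes it below -/
import Mathlib

section
/- For integers k ≥ 2 and m ≥ 1 and a real number α with fractional part β = α - ⌊α⌋, the sum of ⌊α + log_k(i+1)⌋ over i ranging from k^(m-1) to k^m - 1 equals k^(m-1)·((k-1)(m + ⌊α⌋) + 1) + 1 - ⌈k^(m-β)⌉. -/
/-!
Write `α = ⌊α⌋ + β`. For `k ^ (m - 1) ≤ i < k ^ m` we have `m - 1 < log_k (i + 1) ≤ m`, so
`⌊α + log_k (i + 1)⌋` equals `⌊α⌋ + m - 1` when `i + 1 < k ^ (m - β)` and `⌊α⌋ + m` otherwise.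
As `k ^ (m - 1) < k ^ (m - β) ≤ k ^ m`, the summand is a step function on the range of summation
that jumps by one at `i = ⌈k ^ (m - β)⌉ - 1`, and the sum is counted directly.
-/

open Finset Real Int

theorem Int.floor_add_eq_floor_add_iff {K : Type*} [Field K] [LinearOrder K]
    [IsStrictOrderedRing K] [FloorRing K] {α t : K} {M : ℤ} :
    ⌊α + t⌋ = ⌊α⌋ + M ↔ M - fract α ≤ t ∧ t < M + 1 - fract α := by
  have hα := Int.floor_add_fract α
  rw [Int.floor_eq_iff]
  push_cast
  constructor <;> rintro ⟨h₁, h₂⟩ <;> constructor <;> linarith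

theorem Int.exists_natCast_eq_ceil_sub_one {K : Type*} [Ring K] [LinearOrder K] [FloorRing K]
    {x : K} {a b : ℕ} (ha : (a : K) < x) (hb : x ≤ b) :
    ∃ c : ℕ, ⌈x⌉ - 1 = c ∧ a ≤ c ∧ c < b ∧ ∀ i : ℕ, (i : K) + 1 < x ↔ i < c := by
  have ha' : (a : ℤ) < ⌈x⌉ := Int.lt_ceil.mpr (mod_cast ha)
  have hb' : ⌈x⌉ ≤ b := Int.ceil_le.mpr (mod_cast hb)
  obtain ⟨c, hc⟩ : ∃ c : ℕ, ⌈x⌉ - 1 = c := Int.eq_ofNat_of_zero_le (by omega)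
  refine ⟨c, hc, by omega, by omega, fun i ↦ ?_⟩
  rw [show (i : K) + 1 = ((i + 1 : ℤ) : K) by push_cast; rfl, ← Int.lt_ceil]
  omega

theorem Real.floor_add_logb_eq_of_lt_of_lt {b y α : ℝ} {M : ℤ} (hb : 1 < b)
    (hy : b ^ (M : ℝ) < y) (hyb : y < b ^ (M + 1 - fract α)) :
    ⌊α + logb b y⌋ = ⌊α⌋ + M := by
  have hy₀ : 0 < y := (rpow_pos_of_pos (by linarith) _).trans hy
  have hM : M < logb b y := (lt_logb_iff_rpow_lt hb hy₀).mpr hy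
  refine Int.floor_add_eq_floor_add_iff.mpr ⟨?_, (logb_lt_iff_lt_rpow hb hy₀).mpr hyb⟩
  linarith [Int.fract_nonneg α]

theorem Real.floor_add_logb_eq_of_le_of_le {b y α : ℝ} {M : ℤ} (hb : 1 < b)
    (hby : b ^ (M - fract α) ≤ y) (hy : y ≤ b ^ (M : ℝ)) :
    ⌊α + logb b y⌋ = ⌊α⌋ + M := by
  have hy₀ : 0 < y := (rpow_pos_of_pos (by linarith) _).trans_le hby
  have hM : logb b y ≤ M := (logb_le_iff_le_rpow hb hy₀).mpr hy
  refine Int.floor_add_eq_floor_add_iff.mpr ⟨(le_logb_iff_rpow_le hb hy₀).mpr hby, ?_⟩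
  linarith [Int.fract_lt_one α]

theorem Finset.sum_Ico_eq_of_step {R : Type*} [CommRing R] {a c b : ℕ} (hac : a ≤ c)
    (hcb : c ≤ b) {f : ℕ → R} {v : R} (hlo : ∀ i ∈ Ico a c, f i = v)
    (hhi : ∀ i ∈ Ico c b, f i = v + 1) :
    ∑ i ∈ Ico a b, f i = ((b : R) - a) * v + ((b : R) - c) := by
  rw [← sum_Ico_consecutive f hac hcb, sum_congr rfl hlo, sum_congr rfl hhi]
  simp only [sum_const, Nat.card_Ico, nsmul_eq_mul, Nat.cast_sub hac, Nat.cast_sub hcb]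
  ring

theorem Real.rpow_add_one_sub_fract_mem_Ioc {b : ℝ} (hb : 1 < b) (n : ℕ) (α : ℝ) :
    b ^ ((n : ℝ) + 1 - fract α) ∈ Set.Ioc (b ^ n) (b ^ (n + 1)) := by
  rw [← rpow_natCast, ← rpow_natCast, Nat.cast_succ]
  exact ⟨rpow_lt_rpow_of_exponent_lt hb (by linarith [fract_lt_one α]),
    rpow_le_rpow_of_exponent_le hb.le (by linarith [fract_nonneg α])⟩

theorem stmt1 (k : ℕ) (hk : 2 ≤ k) (m : ℕ) (hm : 1 ≤ m) (α β : ℝ)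
    (hβ : β = α - ⌊α⌋) :
    ∑ i ∈ Finset.Ico (k ^ (m - 1)) (k ^ m), ⌊α + Real.logb k ((i : ℝ) + 1)⌋ =
      (k : ℤ) ^ (m - 1) * (((k : ℤ) - 1) * ((m : ℤ) + ⌊α⌋) + 1) + 1 -
        ⌈(k : ℝ) ^ ((m : ℝ) - β)⌉ := by
  obtain ⟨n, rfl⟩ : ∃ n, m = n + 1 := ⟨m - 1, by omega⟩
  rw [hβ, Int.self_sub_floor, Nat.add_sub_cancel]
  have hk₁ : (1 : ℝ) < k := by exact_mod_cast hk
  obtain ⟨hxlo, hxhi⟩ := rpow_add_one_sub_fract_mem_Ioc hk₁ n α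
  obtain ⟨c, hc, hac, hcb, hlt_iff⟩ := Int.exists_natCast_eq_ceil_sub_one (a := k ^ n)
    (b := k ^ (n + 1)) (by exact_mod_cast hxlo) (by exact_mod_cast hxhi)
  rw [sum_Ico_eq_of_step (c := c) (v := ⌊α⌋ + n) hac hcb.le ?_ ?_]
  · push_cast at hc ⊢
    rw [← hc]
    ring
  · intro i hi
    obtain ⟨hai, hic⟩ := mem_Ico.mp hi
    refine floor_add_logb_eq_of_lt_of_lt hk₁ ?_ ?_
    · rw [Int.cast_natCast, rpow_natCast]
      exact_mod_cast Nat.lt_succ_of_le hai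
    · exact_mod_cast (hlt_iff i).mpr hic
  · intro i hi
    obtain ⟨hci, hik⟩ := mem_Ico.mp hi
    rw [floor_add_logb_eq_of_le_of_le (M := ((n + 1 : ℕ) : ℤ)) hk₁ ?_ ?_]
    · push_cast
      ring
    · exact_mod_cast not_lt.mp ((hlt_iff i).not.mpr hci.not_gt)
    · rw [Int.cast_natCast, rpow_natCast]
      exact_mod_cast hik
end

section
/- For the sequence a(n) = ⌊1/2 + log₂(n+1)⌋ and b(m) = ∑_{n : |τ(n)| = m} a(n), where |τ(0)| = 0 and |τ(n)| = ⌊log₂ n⌋ + 1 for n ≥ 1, one has b(m) = (m+1)·2^(m-1) − ⌊2^(m − 1/2)⌋ for all m ≥ 1. -/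
/-!
Write `x = 2 ^ (m - 1/2) = 2 ^ (m - 1) * √2`, which lies strictly between `2 ^ (m - 1)` and `2 ^ m`.
On the block `2 ^ (m - 1) ≤ n < 2 ^ m` the summand is `m - 1` while `n + 1 < x` and `m` afterwards,
so the sum is `(m - 1) 2 ^ (m - 1)` plus the number of `n` with `n + 1 > x`. Since `x` is irrational
the switch happens exactly at `n = ⌊x⌋`, which leaves `(m + 1) 2 ^ (m - 1) - ⌊x⌋`.
-/

open Finset Real

theorem Real.floor_half_add_logb_eq_iff {b y : ℝ} (hb : 1 < b) (hy : 0 < y) (c : ℤ) :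
    ⌊1 / 2 + logb b y⌋ = c ↔ b ^ ((c : ℝ) - 1 / 2) ≤ y ∧ y < b ^ ((c : ℝ) + 1 / 2) := by
  rw [Int.floor_eq_iff, ← le_logb_iff_rpow_le hb hy, ← logb_lt_iff_lt_rpow hb hy]
  constructor <;> rintro ⟨h₁, h₂⟩ <;> constructor <;> linarith

theorem Finset.sum_Ico_eq_of_step_s2 {a K b : ℕ} (haK : a ≤ K) (hKb : K ≤ b) (f : ℕ → ℤ) (c : ℤ)
    (hlow : ∀ n ∈ Ico a K, f n = c) (hhigh : ∀ n ∈ Ico K b, f n = c + 1) :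
    ∑ n ∈ Ico a b, f n = c * ((b : ℤ) - a) + ((b : ℤ) - K) := by
  rw [← sum_Ico_consecutive f haK hKb, sum_congr rfl hlow, sum_congr rfl hhigh]
  simp only [sum_const, Nat.card_Ico, nsmul_eq_mul, Nat.cast_sub haK, Nat.cast_sub hKb]
  ring

theorem Real.two_rpow_add_half (k : ℕ) : (2 : ℝ) ^ ((k : ℝ) + 1 / 2) = 2 ^ k * √2 := by
  rw [rpow_add two_pos, rpow_natCast, sqrt_eq_rpow]

theorem Real.irrational_two_rpow_add_half (k : ℕ) : Irrational ((2 : ℝ) ^ ((k : ℝ) + 1 / 2)) := by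
  rw [two_rpow_add_half]
  exact_mod_cast irrational_sqrt_two.natCast_mul (pow_ne_zero k two_ne_zero)

theorem Real.two_pow_lt_two_rpow_add_half (k : ℕ) : (2 : ℝ) ^ k < 2 ^ ((k : ℝ) + 1 / 2) := by
  rw [← rpow_natCast]
  exact rpow_lt_rpow_of_exponent_lt one_lt_two (by linarith)

theorem Real.two_rpow_add_half_lt_two_pow_succ (k : ℕ) :
    (2 : ℝ) ^ ((k : ℝ) + 1 / 2) < 2 ^ (k + 1) := by
  rw [← rpow_natCast]
  exact rpow_lt_rpow_of_exponent_lt one_lt_two (by push_cast; linarith)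

theorem Real.floor_half_add_logb_two_eq_of_le_of_lt {k : ℕ} {y : ℝ} (h₁ : 2 ^ k ≤ y)
    (h₂ : y < 2 ^ ((k : ℝ) + 1 / 2)) : ⌊1 / 2 + logb 2 y⌋ = k := by
  rw [floor_half_add_logb_eq_iff one_lt_two (lt_of_lt_of_le (by positivity) h₁), Int.cast_natCast]
  refine ⟨?_, h₂⟩
  calc (2 : ℝ) ^ ((k : ℝ) - 1 / 2) ≤ 2 ^ (k : ℝ) :=
        rpow_le_rpow_of_exponent_le one_le_two (by linarith)
    _ ≤ y := by rwa [rpow_natCast]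

theorem Real.floor_half_add_logb_two_eq_succ_of_lt_of_le {k : ℕ} {y : ℝ}
    (h₁ : 2 ^ ((k : ℝ) + 1 / 2) < y) (h₂ : y ≤ 2 ^ (k + 1)) : ⌊1 / 2 + logb 2 y⌋ = k + 1 := by
  rw [floor_half_add_logb_eq_iff one_lt_two (lt_trans (by positivity) h₁)]
  push_cast
  refine ⟨by ring_nf at h₁ ⊢; exact h₁.le, ?_⟩
  calc y ≤ 2 ^ ((k + 1 : ℕ) : ℝ) := by rwa [rpow_natCast]
    _ < 2 ^ ((k : ℝ) + 1 + 1 / 2) := rpow_lt_rpow_of_exponent_lt one_lt_two (by push_cast; linarith)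

theorem stmt2 (m : ℕ) (hm : 1 ≤ m) :
    ∑ n ∈ Finset.Ico (2 ^ (m - 1) : ℕ) (2 ^ m), ⌊(1 : ℝ) / 2 + Real.logb 2 ((n : ℝ) + 1)⌋ =
      ((m : ℤ) + 1) * 2 ^ (m - 1) - ⌊(2 : ℝ) ^ ((m : ℝ) - 1 / 2)⌋ := by
  obtain ⟨k, rfl⟩ := Nat.exists_eq_add_of_le' hm
  have hx : (2 : ℝ) ^ (((k + 1 : ℕ) : ℝ) - 1 / 2) = 2 ^ ((k : ℝ) + 1 / 2) := by push_cast; ring_nf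
  simp only [Nat.add_sub_cancel, hx]
  set x : ℝ := 2 ^ ((k : ℝ) + 1 / 2)
  have hK_low : 2 ^ k ≤ ⌊x⌋₊ := Nat.le_floor (by exact_mod_cast (two_pow_lt_two_rpow_add_half k).le)
  have hK_high : ⌊x⌋₊ ≤ 2 ^ (k + 1) :=
    Nat.floor_le_of_le (by exact_mod_cast (two_rpow_add_half_lt_two_pow_succ k).le)
  rw [sum_Ico_eq_of_step_s2 hK_low hK_high _ k, ← Int.natCast_floor_eq_floor (by positivity)]
  · push_cast; ring
  · intro n hn
    obtain ⟨hn_low, hn_high⟩ := mem_Ico.1 hn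
    -- `n + 1 ≤ ⌊x⌋₊ ≤ x`, and equality is impossible as `x` is irrational
    refine floor_half_add_logb_two_eq_of_le_of_lt (by exact_mod_cast hn_low.trans n.le_succ) ?_
    exact lt_of_le_of_ne (by exact_mod_cast (Nat.le_floor_iff (by positivity)).1 hn_high)
      (by exact_mod_cast (irrational_two_rpow_add_half k).ne_nat (n + 1) |>.symm)
  · intro n hn
    obtain ⟨hn_low, hn_high⟩ := mem_Ico.1 hn
    refine floor_half_add_logb_two_eq_succ_of_lt_of_le ?_ (by exact_mod_cast hn_high)
    exact (Nat.lt_floor_add_one x).trans_le (by exact_mod_cast Nat.add_le_add_right hn_low 1)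
end

section
/- Let k ≥ 2 be an integer and α a real number such that k^α is irrational. Then the power series g(x) = ∑_{m≥1} (⌊−k^(m+1−β)⌋ − k·⌊−k^(m−β)⌋) x^m, where β is the fractional part of α, evaluated at x = 1/k gives g(1/k) = frac(−k^(1−β)), which is irrational. -/
/-!
The coefficient `⌊x k^(m+1)⌋ - k ⌊x k^m⌋` is the `(m+1)`-st base-`k` digit of `x`, so the
series at `1/k` telescopes to `lim ⌊x k^n⌋ / k^n - ⌊x⌋ = fract x`; here `x = -k^(1-β)`.
Irrationality follows from `k^(1-β) = k^(1+⌊α⌋) / k^α`, a rational number divided by an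
irrational one.
-/

open Filter Topology

theorem Irrational.natCast_rpow_intCast_sub {b : ℕ} (hb : 0 < b) {x : ℝ}
    (h : Irrational ((b : ℝ) ^ x)) (n : ℤ) : Irrational ((b : ℝ) ^ ((n : ℝ) - x)) := by
  have hbn : ((b : ℚ) ^ n) ≠ 0 := zpow_ne_zero _ (by exact_mod_cast hb.ne')
  rw [Real.rpow_sub (by exact_mod_cast hb), Real.rpow_intCast]
  simpa using h.ratCast_div hbn

theorem tendsto_floor_mul_pow_div_pow {b : ℝ} (hb : 1 < b) (x : ℝ) :
    Tendsto (fun n : ℕ => (⌊x * b ^ n⌋ : ℝ) / b ^ n) atTop (𝓝 x) := by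
  have hpow : Tendsto (fun n : ℕ => (b ^ n)⁻¹) atTop (𝓝 0) :=
    tendsto_inv_atTop_zero.comp (tendsto_pow_atTop_atTop_of_one_lt hb)
  have hpos : ∀ n : ℕ, 0 < b ^ n := fun n => pow_pos (by linarith) n
  refine tendsto_of_tendsto_of_tendsto_of_le_of_le (g := fun n => x - (b ^ n)⁻¹)
    (by simpa using tendsto_const_nhds.sub hpow) tendsto_const_nhds (fun n => ?_) (fun n => ?_)
  · rw [le_div_iff₀ (hpos n), sub_mul, inv_mul_cancel₀ (hpos n).ne']
    exact (Int.sub_one_lt_floor _).le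
  · rw [div_le_iff₀ (hpos n)]
    exact Int.floor_le _

theorem hasSum_base_digits_fract {k : ℕ} (hk : 2 ≤ k) (x : ℝ) :
    HasSum (fun m : ℕ => ((⌊x * k ^ (m + 1)⌋ - k * ⌊x * k ^ m⌋ : ℤ) : ℝ) * (1 / (k : ℝ)) ^ (m + 1))
      (Int.fract x) := by
  have hk0 : (0 : ℝ) < k := by positivity
  set g : ℕ → ℝ := fun n => (⌊x * k ^ n⌋ : ℝ) / k ^ n
  have hterm : ∀ m : ℕ, ((⌊x * k ^ (m + 1)⌋ - k * ⌊x * k ^ m⌋ : ℤ) : ℝ) * (1 / (k : ℝ)) ^ (m + 1)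
      = g (m + 1) - g m := by
    intro m
    simp only [g]
    rw [one_div_pow, pow_succ]
    push_cast
    field_simp
  have hdigit_nonneg : ∀ m : ℕ, (0 : ℤ) ≤ ⌊x * k ^ (m + 1)⌋ - k * ⌊x * k ^ m⌋ := by
    intro m
    rw [sub_nonneg, Int.le_floor, pow_succ, ← mul_assoc, mul_comm _ (k : ℝ)]
    push_cast
    exact mul_le_mul_of_nonneg_left (Int.floor_le _) hk0.le
  rw [hasSum_iff_tendsto_nat_of_nonneg (fun m => by positivity [hdigit_nonneg m])]
  simp only [hterm, Finset.sum_range_sub, ← Int.self_sub_floor]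
  simpa [g] using (tendsto_floor_mul_pow_div_pow (by exact_mod_cast hk) x).sub_const (⌊x⌋ : ℝ)

theorem stmt8 (k : ℕ) (hk : 2 ≤ k) (α β : ℝ) (hβ : β = α - ⌊α⌋)
    (hirr : Irrational ((k : ℝ) ^ α)) :
    HasSum
      (fun m : ℕ =>
        ((⌊-(k : ℝ) ^ (((m : ℝ) + 1) + 1 - β)⌋ - k * ⌊-(k : ℝ) ^ ((m : ℝ) + 1 - β)⌋ : ℤ) : ℝ) *
          (1 / (k : ℝ)) ^ (m + 1))
      (Int.fract (-(k : ℝ) ^ (1 - β))) ∧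
    Irrational (Int.fract (-(k : ℝ) ^ (1 - β))) := by
  have hk0 : (0 : ℝ) < k := by positivity
  have hshift : ∀ m : ℕ, (k : ℝ) ^ ((m : ℝ) + 1 - β) = (k : ℝ) ^ (1 - β) * k ^ m := fun m => by
    rw [add_sub_assoc, add_comm, Real.rpow_add hk0, Real.rpow_natCast]
  have hexp : 1 - β = ((1 + ⌊α⌋ : ℤ) : ℝ) - α := by
    push_cast
    rw [hβ]
    ring
  refine ⟨?_, ?_⟩
  · convert hasSum_base_digits_fract hk (-(k : ℝ) ^ (1 - β)) using 7 with m
    · rw [neg_mul, ← hshift (m + 1), Nat.cast_succ]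
    · rw [neg_mul, hshift]
  · rw [Int.fract, hexp]
    exact (hirr.natCast_rpow_intCast_sub (by omega) _).neg.sub_intCast _
end

section
/- Let k ≥ 2 be an integer and α a real number such that k^α is rational. Then the sequence d(m) = ⌊−k^(m+1−β)⌋ − k·⌊−k^(m−β)⌋, where β = α − ⌊α⌋, is eventually periodic. -/
/-!
Write `k ^ β = a / b` with `a, b > 0` coprime. Then `⌊-k ^ (m - β)⌋ = ⌊x / a⌋` with `x = -k ^ m b`, and
`⌊k x / a⌋ - k ⌊x / a⌋ = ⌊k (x mod a) / a⌋`, so `d(m)` depends only on `k ^ m mod a`. Powers in the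
finite monoid `ℤ/aℤ` are eventually periodic.
-/

theorem exists_pow_add_eq_pow {M : Type*} [Monoid M] [Finite M] (x : M) :
    ∃ N p : ℕ, 0 < p ∧ ∀ m ≥ N, x ^ (m + p) = x ^ m := by
  obtain ⟨i, j, hij, h⟩ := Finite.exists_ne_map_eq_of_infinite fun n : ℕ => x ^ n
  wlog hlt : i < j generalizing i j
  · exact this j i hij.symm h.symm (by omega)
  refine ⟨i, j - i, by omega, fun m hm => ?_⟩
  calc x ^ (m + (j - i)) = x ^ (m - i) * x ^ j := by rw [← pow_add]; congr 1; omega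
    _ = x ^ (m - i) * x ^ i := by rw [← h]
    _ = x ^ m := by rw [← pow_add]; congr 1; omega

theorem Int.exists_pow_add_modEq_pow (k : ℤ) {a : ℤ} (ha : a ≠ 0) :
    ∃ N p : ℕ, 0 < p ∧ ∀ m ≥ N, k ^ (m + p) ≡ k ^ m [ZMOD a] := by
  have : NeZero a.natAbs := ⟨Int.natAbs_ne_zero.2 ha⟩
  obtain ⟨N, p, hp, h⟩ := exists_pow_add_eq_pow (k : ZMod a.natAbs)
  refine ⟨N, p, hp, fun m hm => ?_⟩
  rw [← Int.modEq_natAbs, ← ZMod.intCast_eq_intCast_iff]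
  push_cast
  exact h m hm

theorem Int.mul_ediv_sub_mul_ediv (k x a : ℤ) : k * x / a - k * (x / a) = k * (x % a) / a := by
  rcases eq_or_ne a 0 with rfl | ha
  · simp
  have hx : k * x = k * (x % a) + k * (x / a) * a := by
    linear_combination k * (Int.emod_add_mul_ediv x a).symm
  rw [hx, Int.add_mul_ediv_right _ _ ha]
  ring

theorem Rat.floor_intCast_div_of_pos (n : ℤ) {r : ℚ} (hr : 0 < r) :
    ⌊(n : ℚ) / r⌋ = n * r.den / r.num := by
  have hnum : ((r.num.toNat : ℕ) : ℤ) = r.num := Int.toNat_of_nonneg (Rat.num_pos.2 hr).le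
  have hr' : (n : ℚ) / r = ((n * r.den : ℤ) : ℚ) / ((r.num.toNat : ℕ) : ℚ) := by
    rw [← Int.cast_natCast (R := ℚ), hnum]
    nth_rewrite 1 [← Rat.num_div_den r]
    have : (r.num : ℚ) ≠ 0 := by exact_mod_cast (Rat.num_pos.2 hr).ne'
    push_cast
    field_simp
  rw [hr', Rat.floor_intCast_div_natCast, hnum]

theorem natCast_rpow_sub_intCast_of_eq_ratCast {k : ℕ} (hk : 0 < k) {α : ℝ} {q : ℚ}
    (hq : (k : ℝ) ^ α = q) (n : ℤ) : (k : ℝ) ^ (α - n) = ((q / (k : ℚ) ^ n : ℚ) : ℝ) := by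
  rw [Real.rpow_sub (by exact_mod_cast hk), Real.rpow_intCast, hq]
  push_cast
  rfl

theorem floor_neg_rpow_natCast_sub {k : ℕ} (hk : 0 < k) {β : ℝ} {r : ℚ} (hr : (k : ℝ) ^ β = r)
    (m : ℕ) :
    ⌊-(k : ℝ) ^ ((m : ℝ) - β)⌋ = -(k ^ m * r.den : ℤ) / r.num := by
  have hk' : (0 : ℝ) < k := by exact_mod_cast hk
  have hr0 : 0 < r := by exact_mod_cast hr ▸ Real.rpow_pos_of_pos hk' β
  have h : -(k : ℝ) ^ ((m : ℝ) - β) = ((((-(k ^ m : ℤ)) : ℤ) : ℚ) / r : ℚ) := by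
    rw [Real.rpow_sub hk', Real.rpow_natCast, hr]
    push_cast
    ring
  rw [h, Rat.floor_cast, Rat.floor_intCast_div_of_pos _ hr0]
  ring_nf

theorem floor_neg_rpow_succ_sub_mul_floor {k : ℕ} (hk : 0 < k) {β : ℝ} {r : ℚ}
    (hr : (k : ℝ) ^ β = r) (m : ℕ) :
    ⌊-(k : ℝ) ^ ((m : ℝ) + 1 - β)⌋ - k * ⌊-(k : ℝ) ^ ((m : ℝ) - β)⌋ =
      k * (-(k ^ m * r.den : ℤ) % r.num) / r.num := by
  rw [← Int.mul_ediv_sub_mul_ediv, ← floor_neg_rpow_natCast_sub hk hr,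
    show (m : ℝ) + 1 = ((m + 1 : ℕ) : ℝ) by push_cast; ring, floor_neg_rpow_natCast_sub hk hr]
  ring_nf

theorem stmt10 (k : ℕ) (hk : 2 ≤ k) (α β : ℝ) (hβ : β = α - ⌊α⌋)
    (hrat : ∃ q : ℚ, (k : ℝ) ^ α = (q : ℝ)) :
    ∃ N p : ℕ, 0 < p ∧ ∀ m ≥ N, 1 ≤ m →
      ⌊-(k : ℝ) ^ ((m : ℝ) + (p : ℝ) + 1 - β)⌋ - k * ⌊-(k : ℝ) ^ ((m : ℝ) + (p : ℝ) - β)⌋ =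
        ⌊-(k : ℝ) ^ ((m : ℝ) + 1 - β)⌋ - k * ⌊-(k : ℝ) ^ ((m : ℝ) - β)⌋ := by
  obtain ⟨q, hq⟩ := hrat
  have hk0 : 0 < k := by omega
  set r : ℚ := q / (k : ℚ) ^ ⌊α⌋
  have hr : (k : ℝ) ^ β = r := hβ ▸ natCast_rpow_sub_intCast_of_eq_ratCast hk0 hq ⌊α⌋
  have hr0 : (0 : ℝ) < r := hr ▸ Real.rpow_pos_of_pos (by positivity) β
  obtain ⟨N, p, hp, hper⟩ :=
    Int.exists_pow_add_modEq_pow k (r.num_ne_zero.2 (by exact_mod_cast hr0.ne'))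
  refine ⟨N, p, hp, fun m hm _ => ?_⟩
  have hdigit := floor_neg_rpow_succ_sub_mul_floor hk0 hr (m + p)
  push_cast at hdigit
  rw [hdigit, floor_neg_rpow_succ_sub_mul_floor hk0 hr m, ((hper m hm).mul_right _).neg]
end

section
/- Let k ≥ 2 be an integer and α a real number, and define b(m) = ∑_{n=k^(m−1)}^{k^m − 1} ⌊α + log_k(n+1)⌋ for m ≥ 1, with b(0) = ⌊α⌋. Then the generating function f(x) = ∑_{m≥0} b(m) x^m is a rational function of x if and only if k^α is rational. -/
/-!
Put `A = ⌊α⌋` and `θ = k ^ (A - α) ∈ (1/k, 1]`. In the `m`-th block the summand is `A + m - 1`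
while `n + 1 < θ k^m` and `A + m` afterwards, so `b m` is a combination of `1`, `k^m` and `m k^m`
minus `e m = fract (-θ k^m)`; hence `f` is rational iff the generating function of `e` is.

If `θ` is rational, `e` is eventually periodic since `k^m` is eventually periodic modulo the
denominator of `θ`. Conversely, `d m = e (m + 1) - k e m` is integer-valued, bounded and has a
rational generating function, so the linear recurrence it satisfies makes it eventually periodic.
Then `e (m + T + j) - e (m + j) = k^j (e (m + T) - e m)` stays in `(-1, 1)`, so `e` is eventually
periodic, which forces `θ`, and with it `k ^ α = k ^ A / θ`, to be rational.
-/

open PowerSeries Filter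
open scoped Polynomial

def rationalGF (K : Type*) [Field K] : Submodule K (ℕ → K) where
  carrier := {u | ∃ P Q : K[X], Q.coeff 0 ≠ 0 ∧ mk u * (Q : K⟦X⟧) = (P : K⟦X⟧)}
  zero_mem' := ⟨0, 1, by simp, by ext; simp⟩
  add_mem' := by
    rintro u v ⟨P₁, Q₁, hQ₁, h₁⟩ ⟨P₂, Q₂, hQ₂, h₂⟩
    refine ⟨P₁ * Q₂ + P₂ * Q₁, Q₁ * Q₂, by simpa [Polynomial.mul_coeff_zero] using ⟨hQ₁, hQ₂⟩, ?_⟩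
    have hmk : mk (u + v) = mk u + mk v := by ext; simp
    push_cast
    rw [hmk, ← h₁, ← h₂]
    ring
  smul_mem' := by
    rintro c u ⟨P, Q, hQ, h⟩
    refine ⟨Polynomial.C c * P, Q, hQ, ?_⟩
    have hmk : mk (c • u) = C c * mk u := by ext; simp
    push_cast
    rw [hmk, mul_assoc, h]

variable {K : Type*} [Field K]

theorem mem_rationalGF_of_eventually_coeff_eq_zero {u : ℕ → K} {Q : K[X]} (hQ : Q.coeff 0 ≠ 0)
    (N : ℕ) (h : ∀ m ≥ N, coeff m (mk u * (Q : K⟦X⟧)) = 0) :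
    u ∈ rationalGF K := by
  refine ⟨trunc N (mk u * Q), Q, hQ, ?_⟩
  ext m
  rw [Polynomial.coeff_coe, coeff_trunc]
  split_ifs with hm
  · rfl
  · exact h m (not_lt.mp hm)

theorem mem_rationalGF_of_eventually_eq_zero {u : ℕ → K} (h : ∀ᶠ m in atTop, u m = 0) :
    u ∈ rationalGF K := by
  obtain ⟨N, hN⟩ := eventually_atTop.mp h
  exact mem_rationalGF_of_eventually_coeff_eq_zero (Q := 1) (by simp) N (by simpa using hN)

theorem mem_rationalGF_congr {u v : ℕ → K} (h : u =ᶠ[atTop] v) :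
    u ∈ rationalGF K ↔ v ∈ rationalGF K := by
  have hvu : v - u ∈ rationalGF K :=
    mem_rationalGF_of_eventually_eq_zero (h.mono fun m hm => by simp [hm])
  constructor
  · intro hu; simpa using add_mem hu hvu
  · intro hv; simpa using sub_mem hv hvu

theorem geometric_mem_rationalGF (r : K) : (fun m => r ^ m) ∈ rationalGF K := by
  refine ⟨1, 1 - Polynomial.C r * Polynomial.X, by simp, ?_⟩
  have h := congrArg (rescale r) (mk_one_mul_one_sub_eq_one K)
  rw [map_mul, rescale_mk, map_sub, map_one, rescale_X] at h
  push_cast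
  simpa using h

theorem natCast_mul_mem_rationalGF {u : ℕ → K} (hu : u ∈ rationalGF K) :
    (fun m : ℕ => (m : K) * u m) ∈ rationalGF K := by
  obtain ⟨P, Q, hQ, h⟩ := hu
  refine ⟨Polynomial.X * (Polynomial.derivative P * Q - P * Polynomial.derivative Q), Q ^ 2,
    by simp [sq, Polynomial.mul_coeff_zero, hQ], ?_⟩
  have hmk : mk (fun m : ℕ => (m : K) * u m) = X * d⁄dX K (mk u) := by
    ext (_ | m)
    · simp
    · rw [coeff_succ_X_mul, coeff_derivative]
      simp [mul_comm]
  have hd := congrArg (d⁄dX K) h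
  rw [Derivation.leibniz, derivative_coe, derivative_coe, smul_eq_mul, smul_eq_mul] at hd
  push_cast
  rw [hmk, ← hd, ← h]
  ring

theorem shift_mem_rationalGF {u : ℕ → K} (hu : u ∈ rationalGF K) :
    (fun m => u (m + 1)) ∈ rationalGF K := by
  obtain ⟨P, Q, hQ, h⟩ := hu
  set R := P - Polynomial.C (u 0) * Q
  have hR0 : R.coeff 0 = 0 := by
    have := congrArg (coeff 0) h
    simp only [coeff_zero_eq_constantCoeff, map_mul, Polynomial.constantCoeff_coe] at this
    simp [R, ← this]
  refine ⟨R.divX, Q, hQ, X_mul_cancel ?_⟩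
  have hmk : mk u = C (u 0) + X * mk fun m => u (m + 1) := by
    ext (_ | m) <;> simp
  have hXR := Polynomial.X_mul_divX_add R
  rw [hR0, map_zero, add_zero] at hXR
  rw [← mul_assoc, ← Polynomial.coe_X, ← Polynomial.coe_mul, hXR]
  simp only [R]
  push_cast
  rw [← h, hmk]
  ring

def EventuallyPeriodic {α : Type*} (u : ℕ → α) : Prop :=
  ∃ N T, 0 < T ∧ ∀ m ≥ N, u (m + T) = u m

theorem mem_rationalGF_of_eventuallyPeriodic {u : ℕ → K} (hu : EventuallyPeriodic u) :
    u ∈ rationalGF K := by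
  obtain ⟨N, T, hT, hper⟩ := hu
  refine mem_rationalGF_of_eventually_coeff_eq_zero (Q := 1 - Polynomial.X ^ T)
    (by simp [Polynomial.coeff_X_pow, hT.ne]) (N + T) fun m hm => ?_
  obtain ⟨n, rfl⟩ : ∃ n, m = n + T := ⟨m - T, by omega⟩
  push_cast
  rw [mul_sub, mul_one, map_sub, coeff_mul_X_pow', if_pos (by omega), coeff_mk, coeff_mk,
    Nat.add_sub_cancel, hper n (by omega), sub_self]

theorem exists_isSolution_of_mem_rationalGF {u : ℕ → K} (hu : u ∈ rationalGF K) :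
    ∃ (E : LinearRecurrence K) (N : ℕ), E.IsSolution fun n => u (N + n) := by
  obtain ⟨P, Q, hQ, h⟩ := hu
  set D := Q.natDegree
  refine ⟨⟨D, fun i => -Q.coeff (D - i) / Q.coeff 0⟩, P.natDegree + 1, fun n => ?_⟩
  set M := P.natDegree + 1 + n
  have hcoeff : ∑ i ∈ Finset.range (D + 1), Q.coeff (D - i) * u (M + i) = 0 := by
    have := congrArg (coeff (M + D)) h
    rw [Polynomial.coeff_coe, Polynomial.coeff_eq_zero_of_natDegree_lt (by omega), coeff_mul,
      Finset.Nat.sum_antidiagonal_eq_sum_range_succ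
        (fun i j => coeff i (mk u) * coeff j (Q : K⟦X⟧))] at this
    rw [show (M + D).succ = M + (D + 1) by omega, Finset.sum_range_add,
      Finset.sum_eq_zero (s := Finset.range M), zero_add] at this
    · rw [← this]
      refine Finset.sum_congr rfl fun i hi => ?_
      rw [coeff_mk, Polynomial.coeff_coe, mul_comm]
      congr 2
      omega
    · intro i hi
      rw [Finset.mem_range] at hi
      rw [Polynomial.coeff_coe, Polynomial.coeff_eq_zero_of_natDegree_lt (by omega), mul_zero]
  rw [Finset.sum_range_succ, Nat.sub_self] at hcoeff
  simp only [← add_assoc]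
  show u (M + D) = ∑ i : Fin D, -Q.coeff (D - i) / Q.coeff 0 * u (M + i)
  rw [Fin.sum_univ_eq_sum_range (fun i => -Q.coeff (D - i) / Q.coeff 0 * u (M + i))]
  have hsum : ∑ i ∈ Finset.range D, -Q.coeff (D - i) / Q.coeff 0 * u (M + i)
      = -(∑ i ∈ Finset.range D, Q.coeff (D - i) * u (M + i)) / Q.coeff 0 := by
    rw [← Finset.sum_neg_distrib, Finset.sum_div]
    exact Finset.sum_congr rfl fun i _ => by ring
  rw [hsum, eq_div_iff hQ]
  linear_combination hcoeff

theorem eventuallyPeriodic_of_mem_rationalGF {u : ℕ → K} (hu : u ∈ rationalGF K)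
    (hfin : (Set.range u).Finite) : EventuallyPeriodic u := by
  obtain ⟨E, N, hE⟩ := exists_isSolution_of_mem_rationalGF hu
  have hshift (t : ℕ) : E.IsSolution fun n => u (N + t + n) := fun n => by
    simpa only [add_assoc] using hE (t + n)
  have : Finite (Set.range u) := hfin.to_subtype
  obtain ⟨t₁, t₂, hne, heq⟩ := Finite.exists_ne_map_eq_of_infinite
    fun t (i : Fin E.order) => (⟨u (N + t + i), Set.mem_range_self _⟩ : Set.range u)
  wlog hlt : t₁ < t₂ generalizing t₁ t₂
  · exact this t₂ t₁ hne.symm heq.symm (by omega)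
  have hwin : (fun n => u (N + t₁ + n)) = fun n => u (N + t₂ + n) :=
    (E.eq_iff_eqOn_range_order _ _ (hshift t₁) (hshift t₂)).mpr fun i hi =>
      congrArg Subtype.val (congrFun heq ⟨i, Finset.mem_range.mp hi⟩)
  refine ⟨N + t₁, t₂ - t₁, by omega, fun m hm => ?_⟩
  have := congrFun hwin (m - (N + t₁))
  rw [show N + t₁ + (m - (N + t₁)) = m by omega,
    show N + t₂ + (m - (N + t₁)) = m + (t₂ - t₁) by omega] at this
  exact this.symm

theorem eventuallyPeriodic_pow {M : Type*} [Monoid M] [Finite M] (a : M) :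
    EventuallyPeriodic (a ^ ·) := by
  obtain ⟨n₁, n₂, hne, heq⟩ := Finite.exists_ne_map_eq_of_infinite (a ^ · : ℕ → M)
  wlog hlt : n₁ < n₂ generalizing n₁ n₂
  · exact this n₂ n₁ hne.symm heq.symm (by omega)
  refine ⟨n₁, n₂ - n₁, by omega, fun m hm => ?_⟩
  calc a ^ (m + (n₂ - n₁)) = a ^ (m - n₁) * a ^ n₂ := by rw [← pow_add]; congr 1; omega
    _ = a ^ m := by rw [← heq, ← pow_add]; congr 1; omega

theorem eq_zero_of_forall_abs_pow_mul_le {r y B : ℝ} (hr : 1 < r) (h : ∀ j : ℕ, |r ^ j * y| ≤ B) :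
    y = 0 := by
  by_contra hy
  obtain ⟨j, hj⟩ := pow_unbounded_of_one_lt (B / |y|) hr
  have := h j
  rw [abs_mul, abs_of_pos (pow_pos (zero_lt_one.trans hr) j), ← le_div_iff₀ (abs_pos.mpr hy)]
    at this
  linarith

theorem eventuallyPeriodic_fract_mul_pow_of_rat (k : ℕ) (q : ℚ) :
    EventuallyPeriodic fun m => Int.fract ((q : ℝ) * k ^ m) := by
  have : NeZero q.den := ⟨q.den_nz⟩
  obtain ⟨N, T, hT, hper⟩ := eventuallyPeriodic_pow (k : ZMod q.den)
  refine ⟨N, T, hT, fun m hm => Int.fract_eq_fract.mpr ?_⟩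
  obtain ⟨c, hc⟩ := (ZMod.intCast_zmod_eq_zero_iff_dvd ((k : ℤ) ^ (m + T) - k ^ m) q.den).mp
    (by push_cast; exact sub_eq_zero.mpr (hper m hm))
  refine ⟨q.num * c, ?_⟩
  have hc' : (k : ℝ) ^ (m + T) - k ^ m = q.den * c := by exact_mod_cast hc
  rw [← mul_sub, hc', Rat.cast_def]
  push_cast
  field_simp

section FractMulPow

variable {k : ℕ} {x : ℝ}

theorem exists_rat_eq_of_eventuallyPeriodic_fract_mul_pow (hk : 2 ≤ k)
    (h : EventuallyPeriodic fun m => Int.fract (x * k ^ m)) : ∃ q : ℚ, x = q := by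
  obtain ⟨N, T, hT, hper⟩ := h
  obtain ⟨z, hz⟩ := Int.fract_eq_fract.mp (hper N le_rfl)
  have hlt : (k : ℤ) ^ N < k ^ (N + T) := pow_lt_pow_right₀ (by omega) (by omega)
  have hne : (k : ℝ) ^ (N + T) - k ^ N ≠ 0 := by exact_mod_cast (sub_pos.mpr hlt).ne'
  refine ⟨z / ((k : ℤ) ^ (N + T) - k ^ N : ℤ), ?_⟩
  push_cast
  rw [eq_div_iff hne, ← hz]
  ring

theorem eventuallyPeriodic_fract_mul_pow_of_mem_rationalGF (hk : 2 ≤ k)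
    (h : (fun m => Int.fract (x * k ^ m)) ∈ rationalGF ℝ) :
    EventuallyPeriodic fun m => Int.fract (x * k ^ m) := by
  set e := fun m => Int.fract (x * k ^ m)
  set d := fun m => e (m + 1) - k * e m
  have hd_mem : d ∈ rationalGF ℝ :=
    sub_mem (shift_mem_rationalGF h) (Submodule.smul_mem _ (k : ℝ) h)
  have hd_range : Set.range d ⊆ Int.cast '' Set.Icc (-k : ℤ) 1 := by
    rintro _ ⟨m, rfl⟩
    have hd_int : d m = ((k * ⌊x * k ^ m⌋ - ⌊x * k ^ (m + 1)⌋ : ℤ) : ℝ) := by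
      simp only [d, e, Int.fract]
      push_cast
      ring
    have he (n : ℕ) : 0 ≤ e n ∧ e n < 1 := ⟨Int.fract_nonneg _, Int.fract_lt_one _⟩
    have hk₀ : (0 : ℝ) < k := by exact_mod_cast (by omega : 0 < k)
    have hlo : -(k : ℝ) < d m := by simp only [d]; nlinarith [he m, he (m + 1)]
    have hhi : d m < 1 := by simp only [d]; nlinarith [he m, he (m + 1)]
    rw [hd_int] at hlo hhi
    exact ⟨_, ⟨by exact_mod_cast hlo.le, by exact_mod_cast hhi.le⟩, hd_int.symm⟩
  obtain ⟨N, T, hT, hper⟩ := eventuallyPeriodic_of_mem_rationalGF hd_mem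
    (((Set.finite_Icc _ _).image _).subset hd_range)
  refine ⟨N, T, hT, fun m hm => ?_⟩
  have hgeom (j : ℕ) : e (m + T + j) - e (m + j) = (k : ℝ) ^ j * (e (m + T) - e m) := by
    induction j with
    | zero => simp
    | succ j ih =>
      have hstep (n : ℕ) : e (n + 1) = k * e n + d n := by simp only [d]; ring
      rw [← add_assoc, ← add_assoc, hstep, hstep, pow_succ,
        show m + T + j = m + j + T by omega, hper (m + j) (by omega)]
      rw [show m + T + j = m + j + T by omega] at ih
      linear_combination (k : ℝ) * ih
  refine sub_eq_zero.mp (eq_zero_of_forall_abs_pow_mul_le (r := k) (B := 1)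
    (by exact_mod_cast hk) fun j => ?_)
  rw [← hgeom]
  exact (abs_sub_lt_of_nonneg_of_lt (Int.fract_nonneg _) (Int.fract_lt_one _)
    (Int.fract_nonneg _) (Int.fract_lt_one _)).le

theorem fract_mul_pow_mem_rationalGF_iff (hk : 2 ≤ k) :
    (fun m => Int.fract (x * k ^ m)) ∈ rationalGF ℝ ↔ ∃ q : ℚ, x = q := by
  refine ⟨fun h => exists_rat_eq_of_eventuallyPeriodic_fract_mul_pow hk
    (eventuallyPeriodic_fract_mul_pow_of_mem_rationalGF hk h), ?_⟩
  rintro ⟨q, rfl⟩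
  exact mem_rationalGF_of_eventuallyPeriodic (eventuallyPeriodic_fract_mul_pow_of_rat k q)

end FractMulPow

theorem floor_add_logb_eq_iff {b α y : ℝ} (hb : 1 < b) (hy : 0 < y) (j : ℤ) :
    ⌊α + Real.logb b y⌋ = j ↔ b ^ ((j : ℝ) - α) ≤ y ∧ y < b ^ ((j : ℝ) + 1 - α) := by
  rw [Int.floor_eq_iff, ← Real.le_logb_iff_rpow_le hb hy, ← Real.logb_lt_iff_lt_rpow hb hy]
  constructor <;> rintro ⟨h₁, h₂⟩ <;> constructor <;> linarith

theorem sum_floor_add_logb {k : ℕ} (hk : 2 ≤ k) (α : ℝ) {m : ℕ} (hm : 1 ≤ m) :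
    ∑ n ∈ Finset.Ico (k ^ (m - 1)) (k ^ m), ⌊α + Real.logb k ((n : ℝ) + 1)⌋
      = (⌊α⌋ + m - 1) * ((k : ℤ) ^ m - k ^ (m - 1))
        + ((k : ℤ) ^ m + 1 - ⌈(k : ℝ) ^ ((⌊α⌋ : ℝ) + m - α)⌉₊) := by
  set A := ⌊α⌋
  set s := ⌈(k : ℝ) ^ ((A : ℝ) + m - α)⌉₊
  have hk₁ : (1 : ℝ) < k := by exact_mod_cast (by omega : 1 < k)
  have hpow (n : ℕ) : (k : ℝ) ^ (n : ℝ) = (k : ℝ) ^ n := Real.rpow_natCast _ _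
  have hm₁ : ((m - 1 : ℕ) : ℝ) = m - 1 := by rw [Nat.cast_sub hm, Nat.cast_one]
  have hs_lo : k ^ (m - 1) < s := by
    rw [Nat.lt_ceil]
    push_cast
    rw [← hpow, hm₁]
    exact Real.rpow_lt_rpow_of_exponent_lt hk₁ (by linarith [Int.lt_floor_add_one α])
  have hs_hi : s ≤ k ^ m := by
    rw [Nat.ceil_le]
    push_cast
    rw [← hpow]
    exact Real.rpow_le_rpow_of_exponent_le hk₁.le (by linarith [Int.floor_le α])
  have hfloor_lo : ∀ n ∈ Finset.Ico (k ^ (m - 1)) (s - 1),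
      ⌊α + Real.logb k ((n : ℝ) + 1)⌋ = A + m - 1 := by
    intro n hn
    rw [Finset.mem_Ico] at hn
    rw [floor_add_logb_eq_iff hk₁ (by positivity)]
    push_cast
    constructor
    · calc (k : ℝ) ^ ((A : ℝ) + m - 1 - α) ≤ k ^ ((m - 1 : ℕ) : ℝ) :=
            Real.rpow_le_rpow_of_exponent_le hk₁.le (by rw [hm₁]; linarith [Int.floor_le α])
        _ ≤ n + 1 := by rw [hpow]; exact_mod_cast (by omega : k ^ (m - 1) ≤ n + 1)
    · rw [show (A : ℝ) + m - 1 + 1 - α = A + m - α by ring]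
      exact_mod_cast Nat.lt_ceil.mp (by omega : n + 1 < s)
  have hfloor_hi : ∀ n ∈ Finset.Ico (s - 1) (k ^ m),
      ⌊α + Real.logb k ((n : ℝ) + 1)⌋ = A + m := by
    intro n hn
    rw [Finset.mem_Ico] at hn
    rw [floor_add_logb_eq_iff hk₁ (by positivity)]
    push_cast
    constructor
    · exact_mod_cast Nat.ceil_le.mp (by omega : s ≤ n + 1)
    · calc (n : ℝ) + 1 ≤ k ^ m := by exact_mod_cast (by omega : n + 1 ≤ k ^ m)
        _ = k ^ (m : ℝ) := (hpow m).symm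
        _ < k ^ ((A : ℝ) + m + 1 - α) :=
            Real.rpow_lt_rpow_of_exponent_lt hk₁ (by linarith [Int.lt_floor_add_one α])
  rw [← Finset.sum_Ico_consecutive _ (by omega : k ^ (m - 1) ≤ s - 1) (by omega : s - 1 ≤ k ^ m),
    Finset.sum_congr rfl hfloor_lo, Finset.sum_congr rfl hfloor_hi, Finset.sum_const,
    Finset.sum_const, Nat.card_Ico, Nat.card_Ico, nsmul_eq_mul, nsmul_eq_mul]
  push_cast [Nat.cast_sub (by omega : k ^ (m - 1) ≤ s - 1), Nat.cast_sub (by omega : 1 ≤ s),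
    Nat.cast_sub (by omega : s - 1 ≤ k ^ m)]
  ring

theorem sum_floor_add_logb_eq {k : ℕ} (hk : 2 ≤ k) (α : ℝ) {m : ℕ} (hm : 1 ≤ m) :
    ((∑ n ∈ Finset.Ico (k ^ (m - 1)) (k ^ m), ⌊α + Real.logb k ((n : ℝ) + 1)⌋ : ℤ) : ℝ)
      = ((⌊α⌋ - 1) * (1 - (k : ℝ)⁻¹) + 1 - k ^ ((⌊α⌋ : ℝ) - α)) * k ^ m
        + (1 - (k : ℝ)⁻¹) * (m * k ^ m) + 1
        - Int.fract (-(k : ℝ) ^ ((⌊α⌋ : ℝ) - α) * k ^ m) := by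
  have hk₀ : (0 : ℝ) < k := by exact_mod_cast (by omega : 0 < k)
  set θ := (k : ℝ) ^ ((⌊α⌋ : ℝ) - α)
  have hw : (k : ℝ) ^ ((⌊α⌋ : ℝ) + m - α) = θ * k ^ m := by
    rw [show (⌊α⌋ : ℝ) + m - α = (⌊α⌋ - α) + m by ring, Real.rpow_add hk₀, Real.rpow_natCast]
  have hceil : (⌈θ * k ^ m⌉₊ : ℝ) = θ * k ^ m + Int.fract (-θ * k ^ m) := by
    rw [← Int.cast_natCast, Int.natCast_ceil_eq_ceil (by positivity), Int.fract, neg_mul,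
      Int.floor_neg]
    push_cast
    ring
  have hpow : (k : ℝ) ^ (m - 1) = k ^ m * (k : ℝ)⁻¹ := by
    rw [pow_sub₀ _ hk₀.ne' hm, pow_one]
  rw [sum_floor_add_logb hk α hm, hw]
  push_cast
  rw [hceil, hpow]
  ring

theorem exists_rat_eq_iff_of_mul_eq_rat {x y : ℝ} {r : ℚ} (hr : r ≠ 0) (h : x * y = r) :
    (∃ q : ℚ, x = q) ↔ ∃ q : ℚ, y = q := by
  have hr' : (r : ℝ) ≠ 0 := Rat.cast_ne_zero.mpr hr
  have hx : x ≠ 0 := left_ne_zero_of_mul (h ▸ hr')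
  have hy : y ≠ 0 := right_ne_zero_of_mul (h ▸ hr')
  constructor
  · rintro ⟨q, rfl⟩
    exact ⟨r / q, by push_cast; rw [eq_div_iff hx, ← h, mul_comm]⟩
  · rintro ⟨q, rfl⟩
    exact ⟨r / q, by push_cast; rw [eq_div_iff hy, ← h]⟩

theorem stmt11_general (k : ℕ) (hk : 2 ≤ k) (α : ℝ) (b : ℕ → ℤ)
    (hb : ∀ m ≥ 1, b m = ∑ n ∈ Finset.Ico (k ^ (m - 1)) (k ^ m),
        ⌊α + Real.logb k ((n : ℝ) + 1)⌋) :
    (∃ P Q : Polynomial ℝ, Q.coeff 0 ≠ 0 ∧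
        (PowerSeries.mk fun m => ((b m : ℝ))) * (Q : PowerSeries ℝ) = (P : PowerSeries ℝ)) ↔
      ∃ q : ℚ, (k : ℝ) ^ α = (q : ℝ) := by
  have hk₀ : (0 : ℝ) < k := by exact_mod_cast (by omega : 0 < k)
  set θ := (k : ℝ) ^ ((⌊α⌋ : ℝ) - α)
  set g : ℕ → ℝ := fun m => ((⌊α⌋ - 1) * (1 - (k : ℝ)⁻¹) + 1 - θ) • (k : ℝ) ^ m
    + (1 - (k : ℝ)⁻¹) • ((m : ℝ) * (k : ℝ) ^ m) + (1 : ℝ) ^ m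
  have hg : g ∈ rationalGF ℝ :=
    add_mem (add_mem (Submodule.smul_mem _ _ (geometric_mem_rationalGF _))
      (Submodule.smul_mem _ _ (natCast_mul_mem_rationalGF (geometric_mem_rationalGF _))))
      (geometric_mem_rationalGF 1)
  have hbg : (fun m => (b m : ℝ)) =ᶠ[atTop] g - fun m => Int.fract (-θ * k ^ m) :=
    eventually_atTop.mpr ⟨1, fun m hm => by
      simp only [hb m hm, sum_floor_add_logb_eq hk α hm, g, smul_eq_mul, one_pow, Pi.sub_apply]
      rfl⟩
  have hθ : -θ * (k : ℝ) ^ α = ((-(k : ℚ) ^ ⌊α⌋ : ℚ) : ℝ) := by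
    rw [neg_mul, ← Real.rpow_add hk₀, sub_add_cancel, Real.rpow_intCast]
    push_cast
    rfl
  change (fun m => (b m : ℝ)) ∈ rationalGF ℝ ↔ _
  rw [mem_rationalGF_congr hbg, Submodule.sub_mem_iff_right _ hg,
    fract_mul_pow_mem_rationalGF_iff hk]
  exact exists_rat_eq_iff_of_mul_eq_rat
    (neg_ne_zero.mpr (zpow_ne_zero _ (by exact_mod_cast (by omega : k ≠ 0)))) hθ

theorem stmt11 (k : ℕ) (hk : 2 ≤ k) (α : ℝ) (b : ℕ → ℤ)
    (hb0 : b 0 = ⌊α⌋)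
    (hb : ∀ m ≥ 1, b m = ∑ n ∈ Finset.Ico (k ^ (m - 1)) (k ^ m),
        ⌊α + Real.logb k ((n : ℝ) + 1)⌋) :
    (∃ P Q : Polynomial ℝ, Q.coeff 0 ≠ 0 ∧
        (PowerSeries.mk fun m => ((b m : ℝ))) * (Q : PowerSeries ℝ) = (P : PowerSeries ℝ)) ↔
      ∃ q : ℚ, (k : ℝ) ^ α = (q : ℝ) :=
  stmt11_general k hk α b hb
end

section
/- Let k ≥ 2 be an integer and α a real number with β = α − ⌊α⌋, and let b(m) = ∑_{n=k^(m−1)}^{k^m − 1} ⌊α + log_k(n+1)⌋ for m ≥ 1 and b(0) = ⌊α⌋. Then as formal power series, ∑_{m≥0} b(m) x^m = (1−x)(kx + ⌊α⌋(1−kx))/(1−kx)² + x/(1−x) + ∑_{m≥1} ⌊−k^(m−β)⌋ x^m. -/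
/-!
Write `β = fract α`. For `k ^ M ≤ n < k ^ (M + 1)` the number `β + log_k (n + 1)` lies in
`(M, M + 2)`, and it reaches `M + 1` exactly when `n + 1 ≥ k ^ (M + 1 - β)`. Hence the block sum
`b (M + 1)` is `(⌊α⌋ + M) (k ^ (M + 1) - k ^ M)` plus the number of such `n`, which is
`k ^ (M + 1) + 1 - ⌈k ^ (M + 1 - β)⌉`. Summing the resulting geometric and arithmetico-geometric
series gives the rational part of the generating function, and `⌊-k ^ (m - β)⌋ = -⌈k ^ (m - β)⌉`
is what is left over.
-/

open Finset

lemma floor_add_logb_eq {k α y : ℝ} {M : ℕ} (hk : 1 < k) (hlo : k ^ M < y)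
    (hhi : y ≤ k ^ (M + 1)) :
    ⌊α + Real.logb k y⌋ =
      ⌊α⌋ + M + if k ^ ((M : ℝ) + 1 - Int.fract α) ≤ y then 1 else 0 := by
  have hy : 0 < y := (pow_pos (by linarith) M).trans hlo
  have hM : (M : ℝ) < Real.logb k y := by
    rwa [Real.lt_logb_iff_rpow_lt hk hy, Real.rpow_natCast]
  have hM1 : Real.logb k y ≤ M + 1 := by
    rwa [Real.logb_le_iff_le_rpow hk hy, ← Nat.cast_succ, Real.rpow_natCast]
  have hfract := Int.fract_nonneg α
  have hfract1 := Int.fract_lt_one α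
  have hsplit : α + Real.logb k y = ⌊α⌋ + (Int.fract α + Real.logb k y) := by
    rw [← add_assoc, Int.floor_add_fract]
  rw [hsplit, Int.floor_intCast_add, add_assoc]
  congr 1
  rw [Int.floor_eq_iff]
  split_ifs with h
  · have := (Real.le_logb_iff_rpow_le hk hy).mpr h
    push_cast
    constructor <;> linarith
  · have := (Real.logb_lt_iff_lt_rpow hk hy).mpr (not_le.mp h)
    push_cast
    constructor <;> linarith

lemma card_filter_Ico_le_add_one {A B : ℕ} {X : ℝ} (hA : (A : ℝ) < X) (hB : X ≤ B) :
    (#{n ∈ Ico A B | X ≤ ((n : ℕ) : ℝ) + 1} : ℤ) = B + 1 + ⌊-X⌋ := by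
  have hAc : A < ⌈X⌉₊ := Nat.lt_ceil.mpr hA
  have hBc : ⌈X⌉₊ ≤ B := Nat.ceil_le.mpr hB
  have hfilter : {n ∈ Ico A B | X ≤ ((n : ℕ) : ℝ) + 1} = Ico (⌈X⌉₊ - 1) B := by
    ext n
    have : X ≤ (n : ℝ) + 1 ↔ ⌈X⌉₊ ≤ n + 1 := by rw [Nat.ceil_le, Nat.cast_succ]
    simp only [mem_filter, mem_Ico, this]
    omega
  rw [hfilter, Nat.card_Ico, Int.floor_neg,
    ← Int.natCast_ceil_eq_ceil (by linarith [A.cast_nonneg (α := ℝ)])]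
  omega

lemma sum_Ico_pow_floor_add_logb {k : ℕ} (hk : 1 < k) (α : ℝ) (M : ℕ) :
    ∑ n ∈ Ico (k ^ M) (k ^ (M + 1)), ⌊α + Real.logb k ((n : ℝ) + 1)⌋ =
      (⌊α⌋ + M) * ((k : ℤ) ^ (M + 1) - (k : ℤ) ^ M) + (k : ℤ) ^ (M + 1) + 1 +
        ⌊-(k : ℝ) ^ ((M : ℝ) + 1 - Int.fract α)⌋ := by
  have hk' : (1 : ℝ) < k := by exact_mod_cast hk
  have hX : (((k ^ M : ℕ) : ℝ)) < (k : ℝ) ^ ((M : ℝ) + 1 - Int.fract α) := by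
    rw [Nat.cast_pow, ← Real.rpow_natCast]
    exact Real.rpow_lt_rpow_of_exponent_lt hk' (by linarith [Int.fract_lt_one α])
  have hX' : (k : ℝ) ^ ((M : ℝ) + 1 - Int.fract α) ≤ ((k ^ (M + 1) : ℕ) : ℝ) := by
    rw [Nat.cast_pow, ← Real.rpow_natCast, Nat.cast_succ]
    exact Real.rpow_le_rpow_of_exponent_le hk'.le (by linarith [Int.fract_nonneg α])
  have hterm : ∀ n ∈ Ico (k ^ M) (k ^ (M + 1)), ⌊α + Real.logb k ((n : ℝ) + 1)⌋ =
      (⌊α⌋ + M) + if (k : ℝ) ^ ((M : ℝ) + 1 - Int.fract α) ≤ (n : ℝ) + 1 then 1 else 0 := by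
    intro n hn
    rw [mem_Ico] at hn
    apply floor_add_logb_eq hk'
    · exact_mod_cast Nat.lt_succ_of_le hn.1
    · exact_mod_cast hn.2
  rw [sum_congr rfl hterm, sum_add_distrib, sum_const, sum_boole, card_filter_Ico_le_add_one hX hX',
    Nat.card_Ico, nsmul_eq_mul, Nat.cast_sub (Nat.pow_le_pow_right (by omega) (by omega : M ≤ M + 1))]
  push_cast
  ring

lemma hasSum_block_main_term (c k x : ℝ) (hkx : ‖k * x‖ < 1) (hx : ‖x‖ < 1) :
    HasSum (fun m : ℕ => ((c + m) * (k ^ (m + 1) - k ^ m) + k ^ (m + 1) + 1) * x ^ (m + 1))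
      (c * (k - 1) * x * (1 - k * x)⁻¹ + (k - 1) * x * (k * x / (1 - k * x) ^ 2) +
        k * x * (1 - k * x)⁻¹ + x * (1 - x)⁻¹) := by
  have hgeom := hasSum_geometric_of_norm_lt_one hkx
  refine ((((hgeom.mul_left (c * (k - 1) * x)).add
    ((hasSum_coe_mul_geometric_of_norm_lt_one hkx).mul_left ((k - 1) * x))).add
    (hgeom.mul_left (k * x))).add ((hasSum_geometric_of_norm_lt_one hx).mul_left x)).congr_fun
    fun m => ?_
  ring

lemma summable_floor_neg_rpow_mul_pow {k : ℕ} (hk : 1 ≤ k) {β x : ℝ} (hβ : 0 ≤ β)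
    (hkx : ‖(k : ℝ) * x‖ < 1) :
    Summable fun m : ℕ => (⌊-(k : ℝ) ^ ((m : ℝ) + 1 - β)⌋ : ℝ) * x ^ (m + 1) := by
  refine Summable.of_norm_bounded ((summable_nat_add_iff 1).mpr
    (summable_geometric_of_lt_one (norm_nonneg _) hkx)) fun m => ?_
  have hk' : (1 : ℝ) ≤ k := by exact_mod_cast hk
  have hceil : ⌈(k : ℝ) ^ ((m : ℝ) + 1 - β)⌉ ≤ (k : ℤ) ^ (m + 1) := by
    rw [Int.ceil_le, ← Nat.cast_succ]
    push_cast
    rw [← Real.rpow_natCast]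
    exact Real.rpow_le_rpow_of_exponent_le hk' (by push_cast; linarith)
  have hpos : 0 ≤ ⌈(k : ℝ) ^ ((m : ℝ) + 1 - β)⌉ := Int.ceil_nonneg (by positivity)
  rw [norm_mul, norm_pow, Int.floor_neg, norm_mul, mul_pow, Real.norm_natCast,
    Int.cast_neg, norm_neg]
  gcongr
  rw [Real.norm_eq_abs, abs_of_nonneg (by exact_mod_cast hpos)]
  exact_mod_cast hceil

theorem stmt12 (k : ℕ) (hk : 2 ≤ k) (α β : ℝ) (hβ : β = α - ⌊α⌋) (b : ℕ → ℤ)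
    (hb0 : b 0 = ⌊α⌋)
    (hb : ∀ m ≥ 1, b m = ∑ n ∈ Finset.Ico (k ^ (m - 1)) (k ^ m),
        ⌊α + Real.logb k ((n : ℝ) + 1)⌋) :
    ∀ x : ℝ, |x| < 1 / (k : ℝ) →
      ∑' m : ℕ, (b m : ℝ) * x ^ m =
        (1 - x) * ((k : ℝ) * x + (⌊α⌋ : ℝ) * (1 - (k : ℝ) * x)) / (1 - (k : ℝ) * x) ^ 2 +
          x / (1 - x) +
          ∑' m : ℕ, ((⌊-(k : ℝ) ^ ((m : ℝ) + 1 - β)⌋ : ℝ)) * x ^ (m + 1) := by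
  intro x hx
  rw [Int.self_sub_floor] at hβ
  subst hβ
  have hk0 : (0 : ℝ) < k := by positivity
  have hkx : ‖(k : ℝ) * x‖ < 1 := by
    rwa [norm_mul, Real.norm_natCast, Real.norm_eq_abs, ← lt_div_iff₀' hk0]
  have hx1 : ‖x‖ < 1 := by
    rw [Real.norm_eq_abs]
    exact hx.trans_le (div_le_one_of_le₀ (by exact_mod_cast hk.trans' one_le_two) hk0.le)
  have hkx1 : 1 - (k : ℝ) * x ≠ 0 := (sub_pos.mpr ((le_abs_self _).trans_lt hkx)).ne'
  have hx1' : 1 - x ≠ 0 := (sub_pos.mpr ((le_abs_self _).trans_lt hx1)).ne'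
  have hE := summable_floor_neg_rpow_mul_pow (by omega) (Int.fract_nonneg α) hkx
  have hshift := ((hasSum_block_main_term (⌊α⌋ : ℝ) k x hkx hx1).add hE.hasSum).congr_fun
    (g := fun m => (b (m + 1) : ℝ) * x ^ (m + 1)) fun m => by
    rw [hb (m + 1) (by omega), Nat.add_sub_cancel, sum_Ico_pow_floor_add_logb (by omega)]
    push_cast
    ring
  rw [(HasSum.zero_add (f := fun m => (b m : ℝ) * x ^ m) hshift).tsum_eq, hb0]
  field_simp
  ring
end

section
/- If k ≥ 2 is an integer and k^α is rational for a real number α, then the sequence {⌊α + log_k(n+1)⌋}_{n≥0} is k-regular. -/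
/-- A sequence of integers is `k`-regular if the ℤ-module generated by the
subsequences `n ↦ a (k^e * n + i)` for `e ≥ 0`, `0 ≤ i < k^e` is finitely generated. -/
def IsKRegular (k : ℕ) (a : ℕ → ℤ) : Prop :=
  (Submodule.span ℤ
    {s : ℕ → ℤ | ∃ e i : ℕ, i < k ^ e ∧ s = fun n => a (k ^ e * n + i)}).FG

/-! Write `k ^ α = p / q` with `p, q` positive integers. Since `⌊log_k (x / q)⌋` only depends on
`⌊x⌋` once `x ≥ q`, for `n ≥ q` the kernel element `n ↦ a (k ^ e * n + i)` equals
`e + ⌊log_k ((p * n + d) / q)⌋` with `d = ⌊p * (i + 1) / k ^ e⌋ ∈ [0, p]`. Hence every element of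
the `k`-kernel is, up to finitely many terms, an integer combination of the constant sequence `1`
and the `p + 1` sequences `n ↦ ⌊log_k ((p * n + d) / q)⌋`. -/

theorem Submodule.mem_of_single_mem_of_forall_le_eq {R : Type*} [Ring R]
    {M : Submodule R (ℕ → R)} {s t : ℕ → R} (N : ℕ) (ht : t ∈ M)
    (hsingle : ∀ m < N, Pi.single m 1 ∈ M) (hst : ∀ n, N ≤ n → s n = t n) : s ∈ M := by
  have hs : s = t + ∑ m ∈ Finset.range N, (s m - t m) • Pi.single m 1 := by
    funext n
    by_cases hn : n < N
    · simp [Finset.sum_apply, Pi.single_apply, hn]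
    · simp [Finset.sum_apply, Pi.single_apply, hst n (not_lt.mp hn)]
  rw [hs]
  exact M.add_mem ht (M.sum_mem fun m hm => M.smul_mem _ (hsingle m (Finset.mem_range.mp hm)))

theorem IsKRegular.of_forall_mem_span {k : ℕ} {a : ℕ → ℤ} {T : Set (ℕ → ℤ)} (hT : T.Finite)
    (h : ∀ e i, i < k ^ e → (fun n => a (k ^ e * n + i)) ∈ Submodule.span ℤ T) :
    IsKRegular k a :=
  (Submodule.fg_span hT).of_le (Submodule.span_le.mpr fun _ ⟨e, i, hi, hs⟩ => hs ▸ h e i hi)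

theorem Rat.exists_natCast_div_natCast {K : Type*} [DivisionRing K] [CharZero K] {r : ℚ}
    (hr : 0 < r) :
    ∃ p q : ℕ, 0 < p ∧ 0 < q ∧ (r : K) = p / q := by
  have hnum_pos := Rat.num_pos.mpr hr
  have hnum : (r.num.toNat : ℤ) = r.num := Int.toNat_of_nonneg hnum_pos.le
  refine ⟨r.num.toNat, r.den, by omega, r.den_pos, ?_⟩
  rw [Rat.cast_def, ← hnum]
  push_cast
  rfl

theorem Real.floor_logb_div_natCast (b : ℕ) {q : ℕ} (hq : 0 < q) {x : ℝ} (hx : q ≤ x) :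
    ⌊logb b (x / q)⌋ = Nat.log b (⌊x⌋₊ / q) := by
  have hq' : (0 : ℝ) < q := by exact_mod_cast hq
  rw [floor_logb_natCast (div_nonneg (hq'.le.trans hx) hq'.le),
    Int.log_of_one_le_right _ ((one_le_div hq').mpr hx), Nat.floor_div_natCast]

theorem floor_add_logb_pow_mul_add {k p q : ℕ} (hk : 1 < k) (hq : 0 < q) {α : ℝ}
    (hα : (k : ℝ) ^ α = p / q) (e j : ℕ) {n : ℕ} (hn : q ≤ p * n) :
    ⌊α + Real.logb k ((k ^ e * n + j : ℕ) : ℝ)⌋ =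
      e + Nat.log k ((p * n + p * j / k ^ e) / q) := by
  have hk' : (1 : ℝ) < k := by exact_mod_cast hk
  have hp_pos : 0 < p := Nat.pos_of_mul_pos_right (hq.trans_le hn)
  have hn_pos : 0 < n := Nat.pos_of_mul_pos_left (hq.trans_le hn)
  set x : ℝ := p * n + p * j / k ^ e with hx_def
  have hx : (q : ℝ) ≤ x := by
    have : (q : ℝ) ≤ p * n := by exact_mod_cast hn
    have : 0 ≤ (p * j / k ^ e : ℝ) := by positivity
    linarith
  have hx_pos : 0 < x / q := div_pos ((Nat.cast_pos.mpr hq).trans_le hx) (by positivity)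
  have hlog : α + Real.logb k ((k ^ e * n + j : ℕ) : ℝ) = e + Real.logb k (x / q) := by
    have hpq : (p / q : ℝ) * (k ^ e * n + j : ℕ) = k ^ e * (x / q) := by
      rw [hx_def]; push_cast; field_simp
    rw [← Real.logb_rpow (b := k) (x := α) (by positivity) hk'.ne', hα,
      ← Real.logb_mul (by positivity) (by positivity), hpq,
      Real.logb_mul (by positivity) hx_pos.ne', Real.logb_pow, Real.logb_self_eq_one hk', mul_one]
  have hfloor : ⌊x⌋₊ = p * n + p * j / k ^ e := by
    rw [show x = (p * j : ℕ) / (k ^ e : ℕ) + (p * n : ℕ) by rw [hx_def]; push_cast; ring,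
      Nat.floor_add_natCast (by positivity), Nat.floor_div_eq_div, add_comm]
  rw [hlog, Int.floor_natCast_add, Real.floor_logb_div_natCast k hq hx, hfloor]

theorem stmt13 (k : ℕ) (hk : 2 ≤ k) (α : ℝ)
    (hrat : ∃ q : ℚ, (k : ℝ) ^ α = (q : ℝ)) :
    IsKRegular k (fun n => ⌊α + Real.logb k ((n : ℝ) + 1)⌋) := by
  obtain ⟨r, hr⟩ := hrat
  have hr_pos : 0 < r := by
    exact_mod_cast hr ▸ Real.rpow_pos_of_pos (by positivity) α
  obtain ⟨p, q, hp, hq, hpq⟩ := Rat.exists_natCast_div_natCast (K := ℝ) hr_pos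
  let logSeq (d : ℕ) : ℕ → ℤ := fun n => Nat.log k ((p * n + d) / q)
  let T : Set (ℕ → ℤ) := insert 1 (logSeq '' Set.Iic p ∪ (fun m => Pi.single m 1) '' Set.Iio q)
  have hT : T.Finite := (((Set.finite_Iic p).image _).union ((Set.finite_Iio q).image _)).insert 1
  refine IsKRegular.of_forall_mem_span hT fun e i hi => ?_
  have hd : p * (i + 1) / k ^ e ≤ p := Nat.div_le_of_le_mul (by rw [mul_comm]; gcongr; omega)
  refine Submodule.mem_of_single_mem_of_forall_le_eq q
    (t := (e : ℤ) • 1 + logSeq (p * (i + 1) / k ^ e)) ?_ ?_ ?_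
  · exact add_mem (Submodule.smul_mem _ _ (Submodule.subset_span (.inl rfl)))
      (Submodule.subset_span (.inr (.inl ⟨_, hd, rfl⟩)))
  · exact fun m hm => Submodule.subset_span (.inr (.inr ⟨m, hm, rfl⟩))
  · intro n hn
    have hfloor := floor_add_logb_pow_mul_add (by omega) hq (hr.trans hpq) e (i + 1)
      (hn.trans (Nat.le_mul_of_pos_left n hp))
    push_cast at hfloor
    simpa [logSeq, add_assoc] using hfloor
end

section
/- If k ≥ 2 is an integer and α is a real number with k^α irrational, then the sequence {⌊α + log_k(n+1)⌋}_{n≥0} is not k-regular. -/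
open Filter Function

theorem linearIndependent_of_apply_eq_ite {R X ι : Type*} [Ring R] [DecidableEq ι]
    {f : ι → X → R} (p : ι → X) (h : ∀ u v, f u (p v) = if v = u then 1 else 0) :
    LinearIndependent R f := by
  rw [linearIndependent_iff']
  intro s g hg i hi
  simpa [Finset.sum_apply, h, Finset.sum_ite_eq', hi] using congrFun hg (p i)

theorem Submodule.not_fg_of_forall_linearIndependent {R M : Type*} [Ring R]
    [StrongRankCondition R] [AddCommGroup M] [Module R M] {N : Submodule R M}
    (h : ∀ s : ℕ, ∃ f : Fin s → M, LinearIndependent R f ∧ ∀ i, f i ∈ N) : ¬ N.FG := by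
  intro hN
  have := Module.Finite.iff_fg.2 hN
  obtain ⟨f, hf, hmem⟩ := h (Module.finrank R N + 1)
  have hcard := LinearIndependent.fintype_card_le_finrank <|
    LinearIndependent.of_comp N.subtype (v := fun i => (⟨f i, hmem i⟩ : N)) hf
  simp at hcard

theorem Irrational.injective_fract_intCast_mul {θ : ℝ} (hθ : Irrational θ) :
    Injective fun z : ℤ => Int.fract (z * θ) := by
  intro z w hzw
  obtain ⟨c, hc⟩ := Int.fract_eq_fract.1 hzw
  by_contra hne
  exact (hθ.intCast_mul (sub_ne_zero.2 hne)).ne_int c (by push_cast; linarith)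

theorem Int.log_sub_log_eq_ite {b : ℕ} (hb : 1 < b) {x y : ℝ} {M : ℤ} (hxy : x ≤ y)
    (hx : (b : ℝ) ^ (M - 1) ≤ x) (hy : y < (b : ℝ) ^ (M + 1)) :
    Int.log b y - Int.log b x = if x < (b : ℝ) ^ M ∧ (b : ℝ) ^ M ≤ y then 1 else 0 := by
  have hx0 : 0 < x := (zpow_pos (by positivity) _).trans_le hx
  have hy0 : 0 < y := hx0.trans_le hxy
  have h1 : M - 1 ≤ Int.log b x := (Int.zpow_le_iff_le_log hb hx0).1 hx
  have h2 : Int.log b y < M + 1 := (Int.lt_zpow_iff_log_lt hb hy0).1 hy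
  have h3 : Int.log b x ≤ Int.log b y := Int.log_mono_right hx0 hxy
  simp only [Int.zpow_le_iff_le_log hb hy0, Int.lt_zpow_iff_log_lt hb hx0]
  split_ifs <;> omega

theorem eventually_injective_ceil_pow_mul {ι : Type*} [Finite ι] {b : ℝ} (hb : 1 < b)
    {δ : ι → ℝ} (hδ : Injective δ) : ∀ᶠ E : ℕ in atTop, Injective fun u => ⌈b ^ E * δ u⌉ := by
  have hsep : ∀ᶠ E : ℕ in atTop, ∀ u v, u ≠ v → 1 ≤ b ^ E * |δ u - δ v| :=
    eventually_all.2 fun u => eventually_all.2 fun v => eventually_imp_distrib_left.2 fun huv =>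
      ((tendsto_pow_atTop_atTop_of_one_lt hb).atTop_mul_const
        (abs_pos.2 (sub_ne_zero.2 (hδ.ne huv)))).eventually_ge_atTop 1
  filter_upwards [hsep] with E hE u v huv
  by_contra hne
  have hdist : |b ^ E * δ u - b ^ E * δ v| < 1 := by
    rw [abs_sub_lt_iff]
    have := Int.ceil_eq_iff.1 huv
    have := Int.ceil_eq_iff.1 (rfl : ⌈b ^ E * δ v⌉ = _)
    constructor <;> linarith
  rw [← mul_sub, abs_mul, abs_of_pos (pow_pos (by linarith) E)] at hdist
  exact (hE u v hne).not_gt hdist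

theorem eventually_one_lt_pow_mul {ι : Type*} [Finite ι] {b : ℝ} (hb : 1 < b)
    {δ : ι → ℝ} (hδ : ∀ u, 0 < δ u) : ∀ᶠ E : ℕ in atTop, ∀ u, 1 < b ^ E * δ u :=
  eventually_all.2 fun u =>
    ((tendsto_pow_atTop_atTop_of_one_lt hb).atTop_mul_const (hδ u)).eventually_gt_atTop 1

section

variable {k : ℕ} {γ : ℝ}

theorem exists_zpow_eq_mul_nat_add (hk : 2 ≤ k) (hγ : 0 < γ) (hirr : Irrational γ) :
    ∃ (n : ℕ → ℕ) (δ : ℕ → ℝ) (m : ℕ → ℤ), Injective δ ∧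
      ∀ v, 1 ≤ n v ∧ 0 < δ v ∧ δ v < 1 ∧ γ * (n v + δ v) = (k : ℝ) ^ m v := by
  have hk1 : (1 : ℝ) < k := by exact_mod_cast hk
  obtain ⟨M, hM⟩ := pow_unbounded_of_one_lt γ hk1
  set t : ℕ → ℝ := fun v => ((k ^ (M + v) : ℕ) : ℤ) * γ⁻¹
  have ht : ∀ v, t v = (k : ℝ) ^ (M + v) / γ := fun v => by simp [t, div_eq_mul_inv]
  have hpow_inj : Injective fun v => ((k ^ (M + v) : ℕ) : ℤ) :=
    Nat.cast_injective.comp ((Nat.pow_right_injective hk).comp (add_right_injective M))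
  refine ⟨fun v => ⌊t v⌋₊, fun v => Int.fract (t v), fun v => (M + v : ℕ),
    hirr.inv.injective_fract_intCast_mul.comp hpow_inj, fun v => ⟨?_, ?_, Int.fract_lt_one _, ?_⟩⟩
  · rw [Nat.one_le_floor_iff, ht, one_le_div hγ]
    exact hM.le.trans (pow_le_pow_right₀ hk1.le (by omega))
  · exact Int.fract_pos.2 ((hirr.inv.intCast_mul (by positivity)).ne_int _)
  · rw [natCast_floor_eq_intCast_floor (by positivity), Int.floor_add_fract, ht,
      mul_div_cancel₀ _ hγ.ne', ← zpow_natCast]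

theorem intLog_kernel_sub_eq_ite (hk : 2 ≤ k) (hγ : 0 < γ) {n : ℕ} (hn : 1 ≤ n) {δ : ℝ}
    (hδ0 : 0 < δ) (hδ1 : δ < 1) {m : ℤ} (hm : γ * (n + δ) = (k : ℝ) ^ m) {E j : ℕ}
    (hj : j + 2 ≤ k ^ E) :
    Int.log k (γ * (((k ^ E * n + (j + 1) : ℕ) : ℝ) + 1))
        - Int.log k (γ * (((k ^ E * n + j : ℕ) : ℝ) + 1))
      = if ⌈(k : ℝ) ^ E * δ⌉ = j + 2 then 1 else 0 := by
  set K : ℝ := (k : ℝ) ^ E with hK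
  have hK0 : 0 < K := by positivity
  have hk2 : (2 : ℝ) ≤ k := by exact_mod_cast hk
  have hn1 : (1 : ℝ) ≤ n := by exact_mod_cast hn
  have hjK : (j : ℝ) + 2 ≤ K := by rw [hK]; exact_mod_cast hj
  have hpow : ∀ d : ℤ, (k : ℝ) ^ (m + E + d) = k ^ d * (γ * (K * (n + δ))) := by
    intro d
    rw [zpow_add₀ (by positivity), zpow_add₀ (by positivity), zpow_natCast, ← hm]
    ring
  have hpow0 := hpow 0
  rw [add_zero, zpow_zero, one_mul] at hpow0
  push_cast
  rw [← hK, Int.log_sub_log_eq_ite (by omega) (M := m + E)]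
  · refine if_congr ?_ rfl rfl
    rw [hpow0, Int.ceil_eq_iff]
    push_cast
    constructor <;> rintro ⟨h1, h2⟩ <;> constructor <;> nlinarith
  · gcongr; linarith
  · rw [sub_eq_add_neg, hpow, zpow_neg_one]
    have hle : K * (n + δ) ≤ k * (K * n + j + 1) :=
      calc K * (n + δ) ≤ 2 * (K * n) := by nlinarith
        _ ≤ k * (K * n + j + 1) := by gcongr; linarith
    rw [inv_mul_le_iff₀ (by positivity)]
    nlinarith [mul_le_mul_of_nonneg_left hle hγ.le]
  · rw [hpow, zpow_one]
    have hlt : K * n + j + 2 < k * (K * (n + δ)) :=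
      calc K * n + j + 2 ≤ 2 * (K * n) := by nlinarith
        _ < 2 * (K * (n + δ)) := by gcongr; linarith
        _ ≤ k * (K * (n + δ)) := by gcongr
    nlinarith [mul_lt_mul_of_pos_left hlt hγ]

theorem not_isKRegular_intLog_mul (hk : 2 ≤ k) (hγ : 0 < γ) (hirr : Irrational γ) :
    ¬ IsKRegular k (fun N => Int.log k (γ * ((N : ℝ) + 1))) := by
  refine Submodule.not_fg_of_forall_linearIndependent fun s => ?_
  obtain ⟨n, δ, m, hδ, hpt⟩ := exists_zpow_eq_mul_nat_add hk hγ hirr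
  have hk1 : (1 : ℝ) < k := by exact_mod_cast hk
  obtain ⟨E, hinj, hbig⟩ := ((eventually_injective_ceil_pow_mul hk1
    (hδ.comp (Fin.val_injective (n := s)))).and
    (eventually_one_lt_pow_mul hk1 fun v : Fin s => (hpt v).2.1)).exists
  have hdigit : ∀ u : Fin s, ∃ j : ℕ, j + 2 ≤ k ^ E ∧ ⌈(k : ℝ) ^ E * δ u⌉ = j + 2 := by
    intro u
    have h1 : 1 < ⌈(k : ℝ) ^ E * δ u⌉ := Int.lt_ceil.2 (by exact_mod_cast hbig u)
    have h2 : ⌈(k : ℝ) ^ E * δ u⌉ ≤ ((k ^ E : ℕ) : ℤ) := Int.ceil_le.2 <| by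
      push_cast
      exact mul_le_of_le_one_right (by positivity) (hpt u).2.2.1.le
    exact ⟨(⌈(k : ℝ) ^ E * δ u⌉ - 2).toNat, by omega, by omega⟩
  choose j hjK hj using hdigit
  refine ⟨fun u N => Int.log k (γ * (((k ^ E * N + (j u + 1) : ℕ) : ℝ) + 1))
      - Int.log k (γ * (((k ^ E * N + j u : ℕ) : ℝ) + 1)),
    linearIndependent_of_apply_eq_ite (fun v => n v) fun u v => ?_,
    fun u => sub_mem (Submodule.subset_span ⟨E, j u + 1, by have := hjK u; omega, rfl⟩)
      (Submodule.subset_span ⟨E, j u, by have := hjK u; omega, rfl⟩)⟩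
  obtain ⟨hn, hδ0, hδ1, hm⟩ := hpt v
  rw [intLog_kernel_sub_eq_ite hk hγ hn hδ0 hδ1 hm (hjK u), ← hj u]
  exact if_congr hinj.eq_iff rfl rfl

end

theorem floor_add_logb_eq_intLog {k : ℕ} (hk : 1 < k) (α : ℝ) {x : ℝ} (hx : 0 < x) :
    ⌊α + Real.logb k x⌋ = Int.log k ((k : ℝ) ^ α * x) := by
  have hk1 : (1 : ℝ) < k := by exact_mod_cast hk
  rw [← Real.floor_logb_natCast (by positivity), Real.logb_mul (by positivity) hx.ne',
    Real.logb_rpow (by positivity) hk1.ne']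

theorem stmt14 (k : ℕ) (hk : 2 ≤ k) (α : ℝ)
    (hirr : Irrational ((k : ℝ) ^ α)) :
    ¬ IsKRegular k (fun n => ⌊α + Real.logb k ((n : ℝ) + 1)⌋) := by
  convert not_isKRegular_intLog_mul hk (by positivity) hirr using 3 with n
  exact floor_add_logb_eq_intLog (by omega) α (by positivity)
end

section
/- If a sequence of integers satisfies a linear recurrence with polynomial coefficients (i.e., is polynomial-recursive / P-recursive) and takes only finitely many distinct values, then it is eventually periodic. -/
/-!
Beyond the largest natural root of the finitely many nonzero polynomials `∑ j, w j • p j`, with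
`w` ranging over windows of values of `a`, the recurrence at `n` forces the polynomial of the
window at `n` to vanish identically. As `p d ≠ 0`, two such windows agreeing in their first `d`
entries then agree in the last one too: from some point on each term is determined by the `d`
preceding ones. By pigeonhole two windows of length `d` coincide, and the sequence repeats from
there.
-/

open Polynomial Filter

theorem Polynomial.eventually_eval_natCast_ne_zero {R : Type*} [CommRing R] [IsDomain R]
    [CharZero R] {f : R[X]} (hf : f ≠ 0) : ∀ᶠ n : ℕ in atTop, f.eval (n : R) ≠ 0 := by
  rw [← Nat.cofinite_eq_atTop]
  exact ((finite_setOfPred_isRoot hf).preimage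
    Nat.cast_injective.injOn).eventually_cofinite_notMem

theorem Fintype.apply_eq_of_linearCombination_eq {R M ι : Type*} [Ring R] [IsDomain R]
    [AddCommGroup M] [Module R M] [Module.IsTorsionFree R M] [Fintype ι] [DecidableEq ι]
    {v : ι → M} {i : ι} (hi : v i ≠ 0) {f g : ι → R}
    (h : Fintype.linearCombination R v f = Fintype.linearCombination R v g)
    (hfg : ∀ j ≠ i, f j = g j) : f i = g i := by
  have hsub : f - g = Pi.single i (f i - g i) := by
    ext j
    by_cases hj : j = i
    · subst hj; simp
    · simp [hj, hfg j hj]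
  rw [← sub_eq_zero, ← map_sub, hsub, Fintype.linearCombination_apply_single] at h
  exact sub_eq_zero.mp ((smul_eq_zero.mp h).resolve_right hi)

theorem Polynomial.eval_fintypeLinearCombination {R ι : Type*} [CommRing R] [Fintype ι]
    (p : ι → R[X]) (w : ι → R) (x : R) :
    (Fintype.linearCombination R p w).eval x = ∑ j, (p j).eval x * w j := by
  simp [Fintype.linearCombination_apply, eval_finsetSum, mul_comm]

def IsDeterminedByWindows {α : Type*} (a : ℕ → α) (d N : ℕ) : Prop :=
  ∀ m n, N ≤ m → N ≤ n → (∀ j : Fin d, a (m + j) = a (n + j)) → a (m + d) = a (n + d)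

section Windows

variable {α : Type*} {a : ℕ → α} {d N : ℕ}

theorem IsDeterminedByWindows.periodic_from (hdet : IsDeterminedByWindows a d N) {m p : ℕ}
    (hm : N ≤ m) (hw : ∀ j : Fin d, a (m + p + j) = a (m + j)) :
    ∀ n ≥ m, a (n + p) = a n := by
  intro n
  induction n using Nat.strong_induction_on with
  | _ n ih =>
    intro hn
    rcases lt_or_ge n (m + d) with hlt | hge
    · have := hw ⟨n - m, by omega⟩
      simp only at this
      rwa [show m + p + (n - m) = n + p by omega, show m + (n - m) = n by omega] at this
    · obtain ⟨k, rfl⟩ : ∃ k, n = k + d := ⟨n - d, by omega⟩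
      refine add_right_comm k d p ▸ hdet (k + p) k (by omega) (by omega) fun j => ?_
      rw [add_right_comm]
      exact ih (k + j) (by omega) (by omega)

theorem exists_window_eq_of_finite_range (hfin : (Set.range a).Finite) (d N : ℕ) :
    ∃ m ≥ N, ∃ p > 0, ∀ j : Fin d, a (m + p + j) = a (m + j) := by
  have hmaps : Set.MapsTo (fun n (j : Fin d) => a (n + j)) (Set.Ici N)
      (Set.univ.pi fun _ => Set.range a) :=
    fun n _ j _ => ⟨n + j, rfl⟩
  obtain ⟨m, hm, m', -, hlt, heq⟩ :=
    (Set.Ici_infinite N).exists_lt_map_eq_of_mapsTo hmaps (Set.Finite.pi fun _ => hfin)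
  refine ⟨m, hm, m' - m, by omega, fun j => ?_⟩
  rw [Nat.add_sub_cancel' hlt.le]
  exact (congrFun heq j).symm

theorem IsDeterminedByWindows.eventually_periodic (hdet : IsDeterminedByWindows a d N)
    (hfin : (Set.range a).Finite) : ∃ N p : ℕ, 0 < p ∧ ∀ n ≥ N, a (n + p) = a n := by
  obtain ⟨m, hm, p, hp, hw⟩ := exists_window_eq_of_finite_range hfin d N
  exact ⟨m, p, hp, hdet.periodic_from hm hw⟩

end Windows

section Recurrence

variable {R : Type*} [CommRing R] [IsDomain R] [CharZero R] {a : ℕ → R} {d N : ℕ}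
  {p : Fin (d + 1) → R[X]}

theorem eventually_linearCombination_window_eq_zero (hfin : (Set.range a).Finite)
    (hrec : ∀ n ≥ N, ∑ j : Fin (d + 1), (p j).eval (n : R) * a (n + j) = 0) :
    ∀ᶠ n in atTop, Fintype.linearCombination R p (fun j => a (n + j)) = 0 := by
  have hroots : ∀ᶠ n : ℕ in atTop, ∀ w ∈ Set.univ.pi fun _ => Set.range a,
      (Fintype.linearCombination R p w).eval (n : R) = 0 →
        Fintype.linearCombination R p w = 0 := by
    refine (Set.Finite.pi fun _ => hfin).eventually_all.2 fun w _ => ?_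
    by_cases hw : Fintype.linearCombination R p w = 0
    · exact .of_forall fun _ _ => hw
    · exact (eventually_eval_natCast_ne_zero hw).mono fun _ hn h => absurd h hn
  filter_upwards [hroots, eventually_ge_atTop N] with n hn hnN
  exact hn _ (fun j _ => ⟨n + j, rfl⟩)
    ((eval_fintypeLinearCombination _ _ _).trans (hrec n hnN))

theorem exists_isDeterminedByWindows (hfin : (Set.range a).Finite)
    (hp : p (Fin.last d) ≠ 0)
    (hrec : ∀ n ≥ N, ∑ j : Fin (d + 1), (p j).eval (n : R) * a (n + j) = 0) :
    ∃ N', IsDeterminedByWindows a d N' := by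
  obtain ⟨N', hN'⟩ := eventually_atTop.1 (eventually_linearCombination_window_eq_zero hfin hrec)
  refine ⟨N', fun m n hm hn hw => ?_⟩
  refine Fintype.apply_eq_of_linearCombination_eq (f := fun j : Fin (d + 1) => a (m + j))
    (g := fun j => a (n + j)) hp ((hN' m hm).trans (hN' n hn).symm) fun j hj => ?_
  obtain ⟨j, rfl⟩ := Fin.exists_castSucc_eq.2 hj
  simpa using hw j

end Recurrence

theorem stmt15 (a : ℕ → ℤ)
    (hrec : ∃ (d : ℕ) (p : Fin (d + 1) → Polynomial ℤ) (N : ℕ),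
        p (Fin.last d) ≠ 0 ∧
        ∀ n ≥ N, ∑ j : Fin (d + 1), (p j).eval (n : ℤ) * a (n + j) = 0)
    (hfin : (Set.range a).Finite) :
    ∃ N p : ℕ, 0 < p ∧ ∀ n ≥ N, a (n + p) = a n := by
  obtain ⟨d, p, N, hp, hrec⟩ := hrec
  obtain ⟨_, hdet⟩ := exists_isDeterminedByWindows hfin hp hrec
  exact hdet.eventually_periodic hfin
end

section
/- Let k ≥ 2 be an integer and α a real number with k^α irrational, and let β = α − ⌊α⌋. Then the sequence d(m) = ⌊−k^(m+1−β)⌋ − k·⌊−k^(m−β)⌋ (m ≥ 1) is not eventually periodic. -/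
/-!
Put `x = -k^(-β)`, so that `-k^(m-β) = k^m x` and `d(m)` is the `(m+1)`-st base-`k` digit of `x`.
If the digits are periodic with period `p` from `N` on, the integers
`u m = ⌊k^(m+p) x⌋ - ⌊k^m x⌋` satisfy `u (m+1) = k u m`, so `u (N+n) = k^n u N`. Since `u m` is within
`1` of `k^m (k^p - 1) x`, the number `k^n (u N - k^N (k^p - 1) x)` stays in `(-1, 1)` for all `n`,
which forces `x = u N / (k^N (k^p - 1))`. Then `k^α = k^⌊α⌋ (-x)⁻¹` is rational.
-/

/-- The `(m+1)`-st digit of `Int.fract x` in base `k`. -/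
noncomputable def baseDigit (k : ℕ) (x : ℝ) (m : ℕ) : ℤ :=
  ⌊(k : ℝ) ^ (m + 1) * x⌋ - k * ⌊(k : ℝ) ^ m * x⌋

lemma abs_floor_sub_floor_sub_sub_lt_one (a b : ℝ) :
    |((⌊a⌋ - ⌊b⌋ : ℤ) : ℝ) - (a - b)| < 1 := by
  have := Int.floor_le a
  have := Int.sub_one_lt_floor a
  have := Int.floor_le b
  have := Int.sub_one_lt_floor b
  rw [abs_lt]
  push_cast
  constructor <;> linarith

lemma eq_zero_of_forall_pow_mul_abs_lt_one {r c : ℝ} (hr : 1 < r) (h : ∀ n : ℕ, r ^ n * |c| < 1) :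
    c = 0 := by
  by_contra hc
  have hc' : 0 < |c| := abs_pos.mpr hc
  obtain ⟨n, hn⟩ := pow_unbounded_of_one_lt |c|⁻¹ hr
  have := (inv_lt_iff_one_lt_mul₀ hc').mp hn
  linarith [h n]

section EventuallyPeriodic

variable {k : ℕ} {x : ℝ} {N p : ℕ}

lemma floor_diff_succ_of_baseDigit_periodic
    (h : ∀ m ≥ N, baseDigit k x (m + p) = baseDigit k x m) {m : ℕ} (hm : N ≤ m) :
    ⌊(k : ℝ) ^ (m + 1 + p) * x⌋ - ⌊(k : ℝ) ^ (m + 1) * x⌋ =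
      k * (⌊(k : ℝ) ^ (m + p) * x⌋ - ⌊(k : ℝ) ^ m * x⌋) := by
  have hm := h m hm
  rw [baseDigit, baseDigit, Nat.add_right_comm] at hm
  linarith

lemma floor_diff_add_of_baseDigit_periodic
    (h : ∀ m ≥ N, baseDigit k x (m + p) = baseDigit k x m) (n : ℕ) :
    ⌊(k : ℝ) ^ (N + n + p) * x⌋ - ⌊(k : ℝ) ^ (N + n) * x⌋ =
      k ^ n * (⌊(k : ℝ) ^ (N + p) * x⌋ - ⌊(k : ℝ) ^ N * x⌋) := by
  induction n with
  | zero => simp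
  | succ n ih =>
    rw [← add_assoc, floor_diff_succ_of_baseDigit_periodic h (Nat.le_add_right N n), ih]
    ring

theorem not_irrational_of_baseDigit_periodic (hk : 1 < k) (hp : 0 < p)
    (h : ∀ m ≥ N, baseDigit k x (m + p) = baseDigit k x m) : ¬ Irrational x := by
  set u : ℤ := ⌊(k : ℝ) ^ (N + p) * x⌋ - ⌊(k : ℝ) ^ N * x⌋
  set D : ℝ := (k : ℝ) ^ (N + p) - (k : ℝ) ^ N
  have hk' : (1 : ℝ) < k := by exact_mod_cast hk
  have hD : 0 < D := sub_pos.mpr (pow_lt_pow_right₀ hk' (by omega))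
  have hclose : ∀ n : ℕ, (k : ℝ) ^ n * |(u : ℝ) - D * x| < 1 := by
    intro n
    have hn := abs_floor_sub_floor_sub_sub_lt_one ((k : ℝ) ^ (N + n + p) * x) ((k : ℝ) ^ (N + n) * x)
    rw [floor_diff_add_of_baseDigit_periodic h n] at hn
    calc (k : ℝ) ^ n * |(u : ℝ) - D * x| = |(k : ℝ) ^ n * ((u : ℝ) - D * x)| := by
          rw [abs_mul, abs_of_pos (pow_pos (zero_lt_one.trans hk') n)]
      _ = |((k ^ n * u : ℤ) : ℝ) - ((k : ℝ) ^ (N + n + p) * x - (k : ℝ) ^ (N + n) * x)| := by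
          congr 1
          push_cast
          ring
      _ < 1 := hn
  have hux : (u : ℝ) = D * x := sub_eq_zero.mp (eq_zero_of_forall_pow_mul_abs_lt_one hk' hclose)
  refine fun hirr => hirr ⟨u / ((k : ℚ) ^ (N + p) - (k : ℚ) ^ N), ?_⟩
  push_cast
  rw [hux, mul_div_cancel_left₀ x hD.ne']

end EventuallyPeriodic

lemma baseDigit_neg_rpow {k : ℕ} (hk : 0 < k) (β : ℝ) (m : ℕ) :
    baseDigit k (-(k : ℝ) ^ (-β)) m =
      ⌊-(k : ℝ) ^ ((m : ℝ) + 1 - β)⌋ - k * ⌊-(k : ℝ) ^ ((m : ℝ) - β)⌋ := by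
  have hk' : (0 : ℝ) < k := by exact_mod_cast hk
  have hpow (n : ℕ) : (k : ℝ) ^ n * -(k : ℝ) ^ (-β) = -(k : ℝ) ^ ((n : ℝ) - β) := by
    rw [sub_eq_add_neg, Real.rpow_add hk', Real.rpow_natCast, mul_neg]
  rw [baseDigit, hpow, hpow, Nat.cast_succ]

theorem stmt16 (k : ℕ) (hk : 2 ≤ k) (α β : ℝ) (hβ : β = α - ⌊α⌋)
    (hirr : Irrational ((k : ℝ) ^ α)) :
    ¬ ∃ N p : ℕ, 0 < p ∧ ∀ m ≥ N, 1 ≤ m →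
        ⌊-(k : ℝ) ^ ((m : ℝ) + (p : ℝ) + 1 - β)⌋ - k * ⌊-(k : ℝ) ^ ((m : ℝ) + (p : ℝ) - β)⌋ =
          ⌊-(k : ℝ) ^ ((m : ℝ) + 1 - β)⌋ - k * ⌊-(k : ℝ) ^ ((m : ℝ) - β)⌋ := by
  rintro ⟨N, p, hp, hper⟩
  have hk0 : (0 : ℝ) < k := by exact_mod_cast (by omega : 0 < k)
  have hdigit : ∀ m ≥ max N 1,
      baseDigit k (-(k : ℝ) ^ (-β)) (m + p) = baseDigit k (-(k : ℝ) ^ (-β)) m := by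
    intro m hm
    rw [baseDigit_neg_rpow (by omega), baseDigit_neg_rpow (by omega)]
    push_cast
    exact hper m (le_of_max_le_left hm) (le_of_max_le_right hm)
  apply not_irrational_of_baseDigit_periodic (by omega) hp hdigit
  have hsplit : (k : ℝ) ^ α = ((k ^ ⌊α⌋ : ℚ) : ℝ) * (-(-(k : ℝ) ^ (-β)))⁻¹ := by
    rw [neg_neg, Real.rpow_neg hk0.le, inv_inv, Rat.cast_zpow, Rat.cast_natCast,
      ← Real.rpow_intCast, ← Real.rpow_add hk0, hβ, add_sub_cancel]
  rw [hsplit] at hirr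
  exact hirr.of_ratCast_mul.of_inv.of_neg
end
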